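/- arXiv:nlin/0606062 — 7 statements merged into one kernel-verified Lean document; each statement's English description precedes it below -/
import Mathlib

section
/- The function R^{1/2} is holomorphic on ℂ ∖ Σ; that is, z ↦ −∏_{j=0}^{2g+1} √(z − E_j) is complex-differentiable at every point of the open set ℂ ∖ Σ (in particular it is holomorphic across each open spectral gap (E_{2k−1}, E_{2k}), 1 ≤ k ≤ g, and across (−∞, E_0)). -/
open Complex Filter Set
open Real Topology

lemma cpow_half_of_re_neg {w : ℂ} (hw : w.re < 0) :
    w ^ ((1:ℂ)/2) = (if 0 ≤ w.im then I else -I) * (-w) ^ ((1:ℂ)/2) := by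
  have hw0 : w ≠ 0 := fun h => by simp [h] at hw
  have hnw0 : -w ≠ 0 := neg_ne_zero.mpr hw0
  have habs : ‖-w‖ = ‖w‖ := by simp
  rw [Complex.cpow_def_of_ne_zero hw0, Complex.cpow_def_of_ne_zero hnw0]
  by_cases him : 0 ≤ w.im
  · have harg : w.arg = (-w).arg + π := by
      rcases lt_or_eq_of_le him with h | h
      · rw [Complex.arg_neg_eq_arg_sub_pi_of_im_pos h]; ring
      · have h1 : w.arg = π := Complex.arg_eq_pi_iff.mpr ⟨hw, h.symm⟩
        have h2 : (-w).arg = 0 := Complex.arg_eq_zero_iff.mpr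
          ⟨by simp only [Complex.neg_re]; linarith, by simp [← h]⟩
        rw [h1, h2]; ring
    have hlog : Complex.log w = Complex.log (-w) + π * I := by
      apply Complex.ext
      · simp [Complex.log_re, habs]
      · simp [Complex.log_im, harg]
    rw [if_pos him, hlog]
    rw [show (Complex.log (-w) + π * I) * (1/2) = (↑(π/2) : ℂ) * I + Complex.log (-w) * (1/2) by
      push_cast; ring]
    rw [Complex.exp_add, Complex.exp_mul_I]
    norm_num [Complex.cos_pi_div_two, Complex.sin_pi_div_two]
  · push_neg at him
    have harg : w.arg = (-w).arg - π := by
      rw [Complex.arg_neg_eq_arg_add_pi_of_im_neg him]; ring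
    have hlog : Complex.log w = Complex.log (-w) - π * I := by
      apply Complex.ext
      · simp [Complex.log_re, habs]
      · simp [Complex.log_im, harg]
    rw [if_neg (not_le.mpr him), hlog]
    rw [show (Complex.log (-w) - π * I) * (1/2) = (↑(-(π/2)) : ℂ) * I + Complex.log (-w) * (1/2) by
      push_cast; ring]
    rw [Complex.exp_add, Complex.exp_mul_I]
    push_cast
    norm_num [Complex.cos_pi_div_two, Complex.sin_pi_div_two, Complex.cos_neg, Complex.sin_neg]

/-- The fixed branch `R^{1/2}(z) = -∏_{j=0}^{2g+1} √(z - E_j)`, where `√` is the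
principal branch of the complex square root (realized as `w ^ (1/2 : ℂ)`). -/
noncomputable def Rhalf (g : ℕ) (E : ℕ → ℝ) (z : ℂ) : ℂ :=
  -∏ j ∈ Finset.range (2 * g + 2), (z - (E j : ℂ)) ^ ((1 : ℂ) / 2)

/-- The union of the bands `Σ = ⋃_{k=0}^{g} [E_{2k}, E_{2k+1}]`, viewed as a subset of `ℂ`. -/
def bandSet (g : ℕ) (E : ℕ → ℝ) : Set ℂ :=
  ⋃ k ∈ Finset.range (g + 1), (Complex.ofReal '' Set.Icc (E (2 * k)) (E (2 * k + 1)))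

lemma ofReal_mem_bandSet (g : ℕ) (E : ℕ → ℝ)
    (hE : ∀ i j : ℕ, i < j → j ≤ 2 * g + 1 → E i < E j)
    {x : ℝ} (hx : ∃ t ≤ g, E (2*t) ≤ x ∧ x ≤ E (2*t+1)) :
    (x : ℂ) ∈ bandSet g E := by
  obtain ⟨t, ht, h1, h2⟩ := hx
  refine Set.mem_iUnion₂.mpr ⟨t, Finset.mem_range.mpr (by omega), ⟨x, ⟨h1, h2⟩, rfl⟩⟩


/-- `R^{1/2}` is holomorphic on `ℂ ∖ Σ`: it is complex differentiable at
every point of the open set `ℂ ∖ Σ`. -/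
theorem Rhalf_differentiableAt (g : ℕ) (hg : 1 ≤ g) (E : ℕ → ℝ)
    (hE : ∀ i j : ℕ, i < j → j ≤ 2 * g + 1 → E i < E j)
    (z : ℂ) (hz : z ∉ bandSet g E) :
    DifferentiableAt ℂ (Rhalf g E) z := by
  classical
  set n := 2 * g + 2 with hn
  -- every E j, j ≤ 2g+1, is in a band
  have hEband : ∀ j ≤ 2 * g + 1, ((E j : ℝ) : ℂ) ∈ bandSet g E := by
    intro j hj
    rcases Nat.even_or_odd j with ⟨t, ht⟩ | ⟨t, ht⟩
    · refine ofReal_mem_bandSet g E hE ⟨t, by omega, ?_, ?_⟩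
      · rw [show 2*t = j by omega]
      · rw [show 2*t = j by omega]; exact (hE j (j+1) (by omega) (by omega)).le
    · refine ofReal_mem_bandSet g E hE ⟨t, by omega, ?_, ?_⟩
      · exact (hE (2*t) j (by omega) (by omega)).le
      · rw [show 2*t+1 = j by omega]
  -- easy case: all factors in slit plane
  have easy : (∀ j < n, z - (E j : ℂ) ∈ Complex.slitPlane) → DifferentiableAt ℂ (Rhalf g E) z := by
    intro hslit
    have : DifferentiableAt ℂ (fun w : ℂ => ∏ j ∈ Finset.range n, (w - (E j : ℂ)) ^ ((1:ℂ)/2)) z := by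
      apply DifferentiableAt.fun_finsetProd
      intro j hj
      exact DifferentiableAt.cpow (differentiableAt_id.sub_const _) (differentiableAt_const _)
        (hslit j (Finset.mem_range.mp hj))
    exact this.neg
  by_cases him : z.im = 0
  swap
  · exact easy fun j hj => Or.inr (by simpa using him)
  -- real case
  set x := z.re with hx
  have hzx : z = (x : ℂ) := Complex.ext rfl (by simp [him])
  have hxne : ∀ j ≤ 2 * g + 1, x ≠ E j := by
    intro j hj h
    exact hz (by rw [hzx, h]; exact hEband j hj)
  by_cases hbig : E (2*g+1) < x
  · refine easy fun j hj => Or.inl ?_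
    have : E j ≤ E (2*g+1) := by
      rcases eq_or_lt_of_le (show j ≤ 2*g+1 by omega) with h | h
      · rw [h]
      · exact (hE j (2*g+1) h le_rfl).le
    simp only [Complex.sub_re, Complex.ofReal_re]
    linarith
  push_neg at hbig
  have hex : ∃ j, x < E j := ⟨2*g+1, lt_of_le_of_ne hbig (hxne (2*g+1) le_rfl)⟩
  set k := Nat.find hex with hkdef
  have hk1 : x < E k := Nat.find_spec hex
  have hkle : k ≤ 2*g+1 := Nat.find_le (lt_of_le_of_ne hbig (hxne (2*g+1) le_rfl))
  have hlt : ∀ j < k, E j < x := by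
    intro j hj
    have h1 : ¬ x < E j := Nat.find_min hex hj
    exact lt_of_le_of_ne (not_lt.mp h1) fun h => hxne j (by omega) h.symm
  have hgt : ∀ j, k ≤ j → j < n → x < E j := by
    intro j hj1 hj2
    rcases eq_or_lt_of_le hj1 with h | h
    · rw [← h]; exact hk1
    · exact hk1.trans (hE k j h (by omega))
  -- k is even
  have hkeven : ∃ t, k = 2 * t := by
    by_contra hodd
    have : ∃ t, k = 2*t+1 := by
      rcases Nat.even_or_odd k with ⟨t, ht⟩ | ⟨t, ht⟩
      · exact absurd ⟨t, by omega⟩ hodd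
      · exact ⟨t, by omega⟩
    obtain ⟨t, ht⟩ := this
    refine hz ?_
    rw [hzx]
    refine ofReal_mem_bandSet g E hE ⟨t, by omega, (hlt (2*t) (by omega)).le, ?_⟩
    rw [show 2*t+1 = k from ht.symm]; exact hk1.le
  obtain ⟨t, htk⟩ := hkeven
  have htg : t ≤ g := by omega
  -- the comparison function, holomorphic near z
  set F : ℂ → ℂ := fun w =>
    -((-1:ℂ)^(g+1-t) * ((∏ j ∈ Finset.range k, (w - (E j : ℂ)) ^ ((1:ℂ)/2)) *
      ∏ j ∈ Finset.Ico k n, ((E j : ℂ) - w) ^ ((1:ℂ)/2))) with hF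
  have hFdiff : DifferentiableAt ℂ F z := by
    apply DifferentiableAt.neg
    apply DifferentiableAt.const_mul
    apply DifferentiableAt.mul
    · apply DifferentiableAt.fun_finsetProd
      intro j hj
      refine DifferentiableAt.cpow (differentiableAt_id.sub_const _) (differentiableAt_const _)
        (Or.inl ?_)
      have := hlt j (Finset.mem_range.mp hj)
      simp only [Complex.sub_re, Complex.ofReal_re]
      linarith
    · apply DifferentiableAt.fun_finsetProd
      intro j hj
      rw [Finset.mem_Ico] at hj
      refine DifferentiableAt.cpow ((differentiableAt_const _).sub differentiableAt_id)
        (differentiableAt_const _) (Or.inl ?_)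
      have := hgt j hj.1 hj.2
      simp only [Complex.sub_re, Complex.ofReal_re]
      linarith
  -- eventual equality
  have hEq : Rhalf g E =ᶠ[𝓝 z] F := by
    have h1 : ∀ᶠ w : ℂ in 𝓝 z, ∀ j ∈ Finset.range k, E j < w.re := by
      rw [eventually_all_finset]
      intro j hj
      have : z ∈ {w : ℂ | E j < w.re} := hlt j (Finset.mem_range.mp hj)
      exact eventually_of_mem ((isOpen_lt continuous_const Complex.continuous_re).mem_nhds this)
        fun w hw => hw
    have h2 : ∀ᶠ w : ℂ in 𝓝 z, ∀ j ∈ Finset.Ico k n, w.re < E j := by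
      rw [eventually_all_finset]
      intro j hj
      rw [Finset.mem_Ico] at hj
      have : z ∈ {w : ℂ | w.re < E j} := hgt j hj.1 hj.2
      exact eventually_of_mem ((isOpen_lt Complex.continuous_re continuous_const).mem_nhds this)
        fun w hw => hw
    filter_upwards [h1, h2] with w hw1 hw2
    set c : ℂ := if 0 ≤ w.im then I else -I with hc
    have hprod : ∏ j ∈ Finset.Ico k n, (w - (E j : ℂ)) ^ ((1:ℂ)/2) =
        c ^ (Finset.Ico k n).card * ∏ j ∈ Finset.Ico k n, ((E j : ℂ) - w) ^ ((1:ℂ)/2) := by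
      rw [← Finset.prod_const, ← Finset.prod_mul_distrib]
      apply Finset.prod_congr rfl
      intro j hj
      have hre : (w - (E j : ℂ)).re < 0 := by
        have := hw2 j hj
        simp only [Complex.sub_re, Complex.ofReal_re]
        linarith
      have := cpow_half_of_re_neg hre
      rw [neg_sub] at this
      rw [this]
      congr 1
      simp [hc, Complex.sub_im]
    have hcard : (Finset.Ico k n).card = 2 * (g + 1 - t) := by
      rw [Nat.card_Ico]; omega
    have hcpow : c ^ (Finset.Ico k n).card = (-1:ℂ)^(g+1-t) := by
      rw [hcard, pow_mul]
      congr 1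
      by_cases h : 0 ≤ w.im <;> simp [hc, h, Complex.I_sq]
    have hsplit : ∏ j ∈ Finset.range n, (w - (E j : ℂ)) ^ ((1:ℂ)/2) =
        (∏ j ∈ Finset.range k, (w - (E j : ℂ)) ^ ((1:ℂ)/2)) *
        ∏ j ∈ Finset.Ico k n, (w - (E j : ℂ)) ^ ((1:ℂ)/2) :=
      (Finset.prod_range_mul_prod_Ico _ (by omega)).symm
    show Rhalf g E w = F w
    rw [Rhalf, hF]
    rw [hsplit, hprod, hcpow]
    ring
  exact hFdiff.congr_of_eventuallyEq hEq
end

section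
/- For every 0 ≤ k ≤ g and every real λ in the open band (E_{2k}, E_{2k+1}) one has R(λ) < 0, the one-sided limit lim_{ε→0⁺} R^{1/2}(λ + iε) exists and equals (−1)^{g−k+1} i √(−R(λ)) (real positive square root), and this limit coincides with the value R^{1/2}(λ) given by the defining formula. In particular the boundary values of R^{1/2} from the upper half plane on the interior of each band are purely imaginary and nonzero. -/
open Complex Filter Set Topology

lemma cpow_half_pos {x : ℝ} (hx : 0 ≤ x) : (x : ℂ) ^ ((1:ℂ)/2) = (Real.sqrt x : ℂ) := by
  have h := Complex.ofReal_cpow hx (1/2)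
  rw [← Real.sqrt_eq_rpow] at h
  rw [show ((1:ℂ)/2) = (((1/2 : ℝ)) : ℂ) by norm_num, ← h]

lemma cpow_half_neg {x : ℝ} (hx : x < 0) :
    (x : ℂ) ^ ((1:ℂ)/2) = Complex.I * (Real.sqrt (-x) : ℂ) := by
  rw [Complex.ofReal_cpow_of_nonpos hx.le,
    show (-(x:ℂ)) = ((-x : ℝ) : ℂ) by push_cast; ring,
    cpow_half_pos (by linarith)]
  have : Complex.exp (Real.pi * Complex.I * ((1:ℂ)/2)) = Complex.I := by
    rw [show (Real.pi : ℂ) * Complex.I * ((1:ℂ)/2) = ((Real.pi/2 : ℝ) : ℂ) * Complex.I by push_cast; ring,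
      Complex.exp_mul_I]
    simp
  rw [this]; ring

lemma cwa_factor {c lam : ℝ} (h : lam ≠ c) :
    ContinuousWithinAt (fun z : ℂ => (z - (c:ℂ)) ^ ((1:ℂ)/2)) {z : ℂ | 0 ≤ z.im} (lam : ℂ) := by
  rcases lt_or_gt_of_ne h with hlt | hgt
  · have hmaps : MapsTo (fun z : ℂ => z - (c:ℂ)) {z : ℂ | 0 ≤ z.im} {z : ℂ | 0 ≤ z.im} := by
      intro z hz; simpa using hz
    have hsub : ContinuousWithinAt (fun z : ℂ => z - (c:ℂ)) {z : ℂ | 0 ≤ z.im} (lam : ℂ) :=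
      (continuous_id.sub continuous_const).continuousWithinAt
    have hlog : ContinuousWithinAt Complex.log {z : ℂ | 0 ≤ z.im} ((lam : ℂ) - c) := by
      apply Complex.continuousWithinAt_log_of_re_neg_of_im_zero
      · simp [sub_re]; linarith
      · simp
    have hlogc : ContinuousWithinAt (fun z : ℂ => Complex.log (z - c)) {z : ℂ | 0 ≤ z.im} (lam : ℂ) :=
      ContinuousWithinAt.comp (g := Complex.log) (f := fun z : ℂ => z - (c:ℂ)) hlog hsub hmaps
    have hexp : ContinuousWithinAt (fun z : ℂ => Complex.exp (((1:ℂ)/2) * Complex.log (z - c)))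
        {z : ℂ | 0 ≤ z.im} (lam : ℂ) :=
      (Complex.continuous_exp.continuousAt).comp_continuousWithinAt
        ((continuousWithinAt_const.mul hlogc))
    apply hexp.congr_of_eventuallyEq_of_mem ?_ (by simp)
    · have hne : ((lam : ℂ) - c) ≠ 0 := by
        intro hz
        have := congrArg Complex.re hz
        simp [sub_re] at this; exact h (by linarith)
      have : ∀ᶠ z in 𝓝 (lam:ℂ), z - (c:ℂ) ≠ 0 := by
        have : ContinuousAt (fun z : ℂ => z - (c:ℂ)) (lam:ℂ) :=
          (continuous_id.sub continuous_const).continuousAt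
        exact this.eventually_ne hne
      filter_upwards [nhdsWithin_le_nhds this] with z hz
      rw [Complex.cpow_def_of_ne_zero hz, mul_comm]
  · have : ContinuousAt (fun z : ℂ => (z - (c:ℂ)) ^ ((1:ℂ)/2)) (lam : ℂ) := by
      apply ContinuousAt.comp (g := fun w : ℂ => w ^ ((1:ℂ)/2))
      · exact continuousAt_cpow_const (by left; simp [sub_re]; linarith)
      · exact (continuous_id.sub continuous_const).continuousAt
    exact this.continuousWithinAt

lemma prod_split {M : Type*} [CommMonoid M] (f : ℕ → M) {m n : ℕ} (h : m ≤ n) :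
    ∏ j ∈ Finset.range n, f j =
      (∏ j ∈ Finset.range m, f j) * ∏ j ∈ Finset.Ico m n, f j := by
  simp only [Finset.range_eq_Ico]
  exact (Finset.prod_Ico_consecutive f (Nat.zero_le m) h).symm

lemma sqrt_prod {s : Finset ℕ} {a : ℕ → ℝ} (h : ∀ j ∈ s, 0 ≤ a j) :
    Real.sqrt (∏ j ∈ s, a j) = ∏ j ∈ s, Real.sqrt (a j) := by
  induction s using Finset.cons_induction with
  | empty => simp
  | cons j s hj ih =>
      rw [Finset.prod_cons, Finset.prod_cons,
        Real.sqrt_mul (h j (Finset.mem_cons_self j s)),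
        ih (fun i hi => h i (Finset.mem_cons_of_mem hi))]

/-- on the interior of each band `(E_{2k}, E_{2k+1})` one has `R(λ) < 0`,
the boundary value of `R^{1/2}` from the upper half plane exists, coincides with the value
of the defining formula at `λ`, and equals the purely imaginary nonzero number
`(-1)^{g-k+1} i √(-R(λ))` (real positive square root). -/
theorem Rhalf_on_bands (g : ℕ) (hg : 1 ≤ g) (E : ℕ → ℝ)
    (hE : ∀ i j : ℕ, i < j → j ≤ 2 * g + 1 → E i < E j)
    (k : ℕ) (hk : k ≤ g) (lam : ℝ)
    (h1 : E (2 * k) < lam) (h2 : lam < E (2 * k + 1)) :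
    (∏ j ∈ Finset.range (2 * g + 2), (lam - E j)) < 0 ∧
      Tendsto (fun ε : ℝ => Rhalf g E ((lam : ℂ) + ε * Complex.I)) (𝓝[>] 0)
        (𝓝 (Rhalf g E (lam : ℂ))) ∧
      Rhalf g E (lam : ℂ) =
        ((-1 : ℂ) ^ (g - k + 1)) * Complex.I *
          (Real.sqrt (-(∏ j ∈ Finset.range (2 * g + 2), (lam - E j))) : ℂ) := by
  have hlt : ∀ j, j ≤ 2*k → E j < lam := by
    intro j hj
    rcases eq_or_lt_of_le hj with rfl | hj'
    · exact h1
    · exact lt_trans (hE j (2*k) hj' (by omega)) h1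
  have hgt : ∀ j, 2*k+1 ≤ j → j ≤ 2*g+1 → lam < E j := by
    intro j hj hj'
    rcases eq_or_lt_of_le hj with rfl | hj2
    · exact h2
    · exact lt_trans h2 (hE (2*k+1) j hj2 hj')
  have hmn : 2*k+1 ≤ 2*g+2 := by omega
  have hcard : (Finset.Ico (2*k+1) (2*g+2)).card = 2*(g-k)+1 := by
    rw [Nat.card_Ico]; omega
  have hP1 : 0 < ∏ j ∈ Finset.range (2*k+1), (lam - E j) := by
    apply Finset.prod_pos
    intro j hj
    rw [Finset.mem_range] at hj
    have := hlt j (by omega); linarith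
  have hQ : 0 < ∏ j ∈ Finset.Ico (2*k+1) (2*g+2), (E j - lam) := by
    apply Finset.prod_pos
    intro j hj
    rw [Finset.mem_Ico] at hj
    have := hgt j hj.1 (by omega); linarith
  have hP2 : ∏ j ∈ Finset.Ico (2*k+1) (2*g+2), (lam - E j) =
      (-1:ℝ)^((Finset.Ico (2*k+1) (2*g+2)).card) *
        ∏ j ∈ Finset.Ico (2*k+1) (2*g+2), (E j - lam) := by
    rw [← Finset.prod_const, ← Finset.prod_mul_distrib]
    apply Finset.prod_congr rfl; intros; ring
  have hodd : (-1:ℝ)^((Finset.Ico (2*k+1) (2*g+2)).card) = -1 := by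
    rw [hcard]; exact Odd.neg_one_pow ⟨g-k, by ring⟩
  have hR : ∏ j ∈ Finset.range (2*g+2), (lam - E j) =
      -((∏ j ∈ Finset.range (2*k+1), (lam - E j)) *
        ∏ j ∈ Finset.Ico (2*k+1) (2*g+2), (E j - lam)) := by
    rw [prod_split _ hmn, hP2, hodd]; ring
  refine ⟨by rw [hR]; nlinarith, ?_, ?_⟩
  · -- tendsto
    have hne : ∀ j ∈ Finset.range (2*g+2), lam ≠ E j := by
      intro j hj
      rw [Finset.mem_range] at hj
      rcases le_or_gt j (2*k) with h | h
      · exact (hlt j h).ne'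
      · exact (hgt j (by omega) (by omega)).ne
    have hcwa : ContinuousWithinAt (Rhalf g E) {z : ℂ | 0 ≤ z.im} (lam : ℂ) := by
      apply ContinuousWithinAt.neg
      exact tendsto_finset_prod _ (fun j hj => cwa_factor (hne j hj))
    have hmap : Tendsto (fun ε : ℝ => (lam:ℂ) + ε * Complex.I) (𝓝[>] 0)
        (𝓝[{z : ℂ | 0 ≤ z.im}] (lam : ℂ)) := by
      rw [tendsto_nhdsWithin_iff]
      constructor
      · have h0 : Tendsto (fun ε : ℝ => (lam:ℂ) + ε * Complex.I) (𝓝 0) (𝓝 (lam:ℂ)) := by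
          have hc : Continuous (fun ε : ℝ => (lam:ℂ) + ε * Complex.I) := by continuity
          simpa using hc.tendsto (0:ℝ)
        exact h0.mono_left nhdsWithin_le_nhds
      · filter_upwards [self_mem_nhdsWithin] with ε (hε : (0:ℝ) < ε)
        simp [Complex.add_im, Complex.mul_im, hε.le]
    exact hcwa.tendsto.comp hmap
  · -- value
    have hfac : ∀ j ∈ Finset.range (2*g+2),
        ((lam:ℂ) - (E j : ℂ)) ^ ((1:ℂ)/2) = (((lam - E j : ℝ)) : ℂ) ^ ((1:ℂ)/2) := by
      intro j _; push_cast; ring_nf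
    have hnn1 : ∀ j ∈ Finset.range (2*k+1), 0 ≤ lam - E j := by
      intro j hj
      rw [Finset.mem_range] at hj
      have := hlt j (by omega); linarith
    have hnn2 : ∀ j ∈ Finset.Ico (2*k+1) (2*g+2), 0 ≤ E j - lam := by
      intro j hj
      rw [Finset.mem_Ico] at hj
      have := hgt j hj.1 (by omega); linarith
    have hprod1 : ∏ j ∈ Finset.range (2*k+1), (((lam - E j : ℝ)) : ℂ) ^ ((1:ℂ)/2) =
        ((Real.sqrt (∏ j ∈ Finset.range (2*k+1), (lam - E j)) : ℝ) : ℂ) := by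
      have heach : ∀ j ∈ Finset.range (2*k+1),
          (((lam - E j : ℝ)) : ℂ) ^ ((1:ℂ)/2) = ((Real.sqrt (lam - E j) : ℝ) : ℂ) :=
        fun j hj => cpow_half_pos (hnn1 j hj)
      rw [Finset.prod_congr rfl heach, ← Complex.ofReal_prod, sqrt_prod hnn1]
    have hprod2 : ∏ j ∈ Finset.Ico (2*k+1) (2*g+2), (((lam - E j : ℝ)) : ℂ) ^ ((1:ℂ)/2) =
        ((-1:ℂ))^(g-k) * Complex.I *
          ((Real.sqrt (∏ j ∈ Finset.Ico (2*k+1) (2*g+2), (E j - lam)) : ℝ) : ℂ) := by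
      have heach : ∀ j ∈ Finset.Ico (2*k+1) (2*g+2),
          (((lam - E j : ℝ)) : ℂ) ^ ((1:ℂ)/2) =
            Complex.I * ((Real.sqrt (E j - lam) : ℝ) : ℂ) := by
        intro j hj
        rw [Finset.mem_Ico] at hj
        have h := hgt j hj.1 (by omega)
        rw [cpow_half_neg (by linarith)]
        norm_num
      rw [Finset.prod_congr rfl heach, Finset.prod_mul_distrib, Finset.prod_const, hcard,
        sqrt_prod hnn2, Complex.ofReal_prod,
        show Complex.I ^ (2*(g-k)+1) = ((-1:ℂ))^(g-k) * Complex.I by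
          rw [pow_succ, pow_mul]; norm_num]
    have hsqrt : Real.sqrt (-(∏ j ∈ Finset.range (2*g+2), (lam - E j))) =
        Real.sqrt (∏ j ∈ Finset.range (2*k+1), (lam - E j)) *
          Real.sqrt (∏ j ∈ Finset.Ico (2*k+1) (2*g+2), (E j - lam)) := by
      rw [hR, neg_neg, Real.sqrt_mul hP1.le]
    unfold Rhalf
    rw [Finset.prod_congr rfl hfac, prod_split _ hmn, hprod1, hprod2, hsqrt,
      pow_succ]
    push_cast
    ring
end

section
/- Let P be a polynomial with real coefficients of degree at most g − 1. If ∫_{E_{2k−1}}^{E_{2k}} P(λ) / √(R(λ)) dλ = 0 for every 1 ≤ k ≤ g, then P is the zero polynomial. (This is the nondegeneracy of the a-period map underlying the invertibility of the matrix C_{jk} = 2∫_{E_{2k−1}}^{E_{2k}} λ^{j−1} dλ / R^{1/2}(λ) used to construct the canonical basis of holomorphic differentials ζ_j.) -/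
open Complex Filter Set MeasureTheory intervalIntegral


lemma ae_ne_pt (a : ℝ) : ∀ᵐ x ∂(volume : Measure ℝ), x ≠ a := by
  rw [ae_iff]
  simp only [not_not]
  simp [Real.volume_singleton]

/-- Integrability from a bound `K * (x - a)^(-1/2)` on the open interval. -/
lemma aux_int_left {a b K : ℝ} {f : ℝ → ℝ} (hab : a ≤ b)
    (hm : AEStronglyMeasurable f (volume.restrict (Set.uIoc a b)))
    (hb : ∀ x ∈ Ioo a b, |f x| ≤ K * (x - a) ^ (-(1/2) : ℝ)) :
    IntervalIntegrable f volume a b := by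
  have h0 : IntervalIntegrable (fun x : ℝ => x ^ (-(1/2) : ℝ)) volume (a - a) (b - a) :=
    intervalIntegrable_rpow' (by norm_num)
  have h1 := (h0.comp_sub_right a).const_mul K
  simp only [sub_add_cancel] at h1
  refine h1.mono_fun' hm ?_
  filter_upwards [ae_restrict_mem measurableSet_uIoc,
    ae_restrict_of_ae (ae_ne_pt b)] with x hx hxb
  rw [uIoc_of_le hab, Set.mem_Ioc] at hx
  simpa [Real.norm_eq_abs] using hb x ⟨hx.1, lt_of_le_of_ne hx.2 hxb⟩

lemma aux_int_right {a b K : ℝ} {f : ℝ → ℝ} (hab : a ≤ b)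
    (hm : AEStronglyMeasurable f (volume.restrict (Set.uIoc a b)))
    (hb : ∀ x ∈ Ioo a b, |f x| ≤ K * (b - x) ^ (-(1/2) : ℝ)) :
    IntervalIntegrable f volume a b := by
  have h0 : IntervalIntegrable (fun x : ℝ => x ^ (-(1/2) : ℝ)) volume (b - a) (b - b) :=
    (intervalIntegrable_rpow' (by norm_num)).symm
  have h1 := (h0.comp_sub_left b).const_mul K
  simp only [sub_sub_cancel] at h1
  refine h1.mono_fun' hm ?_
  filter_upwards [ae_restrict_mem measurableSet_uIoc,
    ae_restrict_of_ae (ae_ne_pt b)] with x hx hxb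
  rw [uIoc_of_le hab, Set.mem_Ioc] at hx
  simpa [Real.norm_eq_abs] using hb x ⟨hx.1, lt_of_le_of_ne hx.2 hxb⟩

/-- Main integrability lemma: `p x / sqrt (r x)` is interval integrable when
`r x ≥ c (x-a)(b-x)` on `[a,b]`. -/
lemma integrable_div_sqrt {a b c : ℝ} (hab : a < b) (hc : 0 < c) {p r : ℝ → ℝ}
    (hp : Continuous p) (hr : Continuous r)
    (hlow : ∀ x ∈ Icc a b, c * ((x - a) * (b - x)) ≤ r x) :
    IntervalIntegrable (fun x => p x / Real.sqrt (r x)) volume a b := by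
  obtain ⟨M, hM⟩ : ∃ M, ∀ x ∈ Icc a b, |p x| ≤ M := by
    obtain ⟨x₀, hx₀, hmax⟩ := (isCompact_Icc (a := a) (b := b)).exists_isMaxOn
      ⟨a, left_mem_Icc.2 hab.le⟩ (continuous_abs.comp hp).continuousOn
    exact ⟨|p x₀|, fun x hx => hmax hx⟩
  set m := (a + b) / 2 with hm
  have ham : a < m := by rw [hm]; linarith
  have hmb : m < b := by rw [hm]; linarith
  have hmeas : ∀ u v : ℝ, AEStronglyMeasurable (fun x => p x / Real.sqrt (r x))
      (volume.restrict (Set.uIoc u v)) := fun u v =>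
    ((hp.measurable.div ((Real.continuous_sqrt.comp hr).measurable))).aestronglyMeasurable.restrict
  have hleft : IntervalIntegrable (fun x => p x / Real.sqrt (r x)) volume a m := by
    set K := M / Real.sqrt (c * (b - m)) with hK
    apply aux_int_left ham.le (hmeas a m)
    intro x hx
    rw [Set.mem_Ioo] at hx
    have hxa : 0 < x - a := by linarith [hx.1]
    have hxb : b - m < b - x := by linarith [hx.2]
    have hbm : (0:ℝ) < b - m := by linarith
    have hr1 : c * (b - m) * (x - a) ≤ r x := by
      have h2 := hlow x ⟨by linarith, by linarith⟩
      nlinarith [mul_nonneg (mul_pos hc hxa).le (by linarith : (0:ℝ) ≤ (b - x) - (b - m))]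
    have hs : Real.sqrt (c * (b - m)) * Real.sqrt (x - a) ≤ Real.sqrt (r x) := by
      rw [← Real.sqrt_mul (by positivity)]
      exact Real.sqrt_le_sqrt hr1
    have hspos : 0 < Real.sqrt (c * (b - m)) * Real.sqrt (x - a) := by
      apply mul_pos <;> exact Real.sqrt_pos.2 (by positivity)
    have hMx : |p x| ≤ M := hM x ⟨by linarith, by linarith⟩
    have hM0 : 0 ≤ M := le_trans (abs_nonneg _) hMx
    calc |p x / Real.sqrt (r x)| = |p x| / Real.sqrt (r x) := by
            rw [abs_div, _root_.abs_of_nonneg (Real.sqrt_nonneg _)]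
      _ ≤ M / (Real.sqrt (c * (b - m)) * Real.sqrt (x - a)) :=
            div_le_div₀ hM0 hMx hspos hs
      _ = K * (x - a) ^ (-(1/2) : ℝ) := by
            rw [Real.rpow_neg hxa.le, ← Real.sqrt_eq_rpow, hK]
            field_simp
  have hright : IntervalIntegrable (fun x => p x / Real.sqrt (r x)) volume m b := by
    set K := M / Real.sqrt (c * (m - a)) with hK
    apply aux_int_right hmb.le (hmeas m b)
    intro x hx
    rw [Set.mem_Ioo] at hx
    have hxb : 0 < b - x := by linarith [hx.2]
    have hxa : m - a < x - a := by linarith [hx.1]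
    have hma : (0:ℝ) < m - a := by linarith
    have hr1 : c * (m - a) * (b - x) ≤ r x := by
      have h2 := hlow x ⟨by linarith, by linarith⟩
      nlinarith [mul_nonneg (mul_pos hc hxb).le (by linarith : (0:ℝ) ≤ (x - a) - (m - a))]
    have hs : Real.sqrt (c * (m - a)) * Real.sqrt (b - x) ≤ Real.sqrt (r x) := by
      rw [← Real.sqrt_mul (by positivity)]
      exact Real.sqrt_le_sqrt hr1
    have hspos : 0 < Real.sqrt (c * (m - a)) * Real.sqrt (b - x) := by
      apply mul_pos <;> exact Real.sqrt_pos.2 (by positivity)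
    have hMx : |p x| ≤ M := hM x ⟨by linarith, by linarith⟩
    have hM0 : 0 ≤ M := le_trans (abs_nonneg _) hMx
    calc |p x / Real.sqrt (r x)| = |p x| / Real.sqrt (r x) := by
            rw [abs_div, _root_.abs_of_nonneg (Real.sqrt_nonneg _)]
      _ ≤ M / (Real.sqrt (c * (m - a)) * Real.sqrt (b - x)) :=
            div_le_div₀ hM0 hMx hspos hs
      _ = K * (b - x) ^ (-(1/2) : ℝ) := by
            rw [Real.rpow_neg hxb.le, ← Real.sqrt_eq_rpow, hK]
            field_simp
  exact hleft.trans hright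


lemma gap_lower_bound {g k : ℕ} (hk1 : 1 ≤ k) (hkg : k ≤ g) {E : ℕ → ℝ}
    (hE : ∀ i j : ℕ, i < j → j ≤ 2 * g + 1 → E i < E j) :
    ∃ c > 0, ∀ x ∈ Icc (E (2*k-1)) (E (2*k)),
      c * ((x - E (2*k-1)) * (E (2*k) - x)) ≤ ∏ j ∈ Finset.range (2*g+2), (x - E j) := by
  set a := E (2*k-1) with ha
  set b := E (2*k) with hb
  have hab : a < b := hE _ _ (by omega) (by omega)
  set s := ((Finset.range (2*g+2)).erase (2*k)).erase (2*k-1) with hsdef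
  set S : ℝ → ℝ := fun x => -∏ j ∈ s, (x - E j) with hS
  have hcontS : Continuous S :=
    (continuous_finset_prod s fun j _ => continuous_id.sub continuous_const).neg
  -- factorization
  have hfact : ∀ x : ℝ, (∏ j ∈ Finset.range (2*g+2), (x - E j))
      = (x - a) * ((b - x) * S x) := by
    intro x
    have h2 : 2*k ∈ Finset.range (2*g+2) := by
      simp only [Finset.mem_range]; omega
    have h1 : 2*k-1 ∈ (Finset.range (2*g+2)).erase (2*k) := by
      simp only [Finset.mem_erase, Finset.mem_range]; omega
    rw [← Finset.mul_prod_erase _ _ h2, ← Finset.mul_prod_erase _ _ h1, ← hsdef, hS]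
    ring
  -- S is positive on [a, b]
  have hSpos : ∀ x ∈ Icc a b, 0 < S x := by
    intro x hx
    have hs2 : s = Finset.range (2*k-1) ∪ Finset.Ico (2*k+1) (2*g+2) := by
      ext j
      simp only [hsdef, Finset.mem_erase, Finset.mem_range, Finset.mem_union, Finset.mem_Ico]
      omega
    have hdisj : Disjoint (Finset.range (2*k-1)) (Finset.Ico (2*k+1) (2*g+2)) := by
      rw [Finset.disjoint_left]
      intro j h1 h2
      simp only [Finset.mem_range] at h1
      simp only [Finset.mem_Ico] at h2
      omega
    have hP1 : 0 < ∏ j ∈ Finset.range (2*k-1), (x - E j) := by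
      apply Finset.prod_pos
      intro j hj
      simp only [Finset.mem_range] at hj
      have := hE j (2*k-1) (by omega) (by omega)
      have := hx.1
      rw [← ha] at *
      linarith
    have hP3 : 0 < ∏ j ∈ Finset.Ico (2*k+1) (2*g+2), (E j - x) := by
      apply Finset.prod_pos
      intro j hj
      simp only [Finset.mem_Ico] at hj
      have := hE (2*k) j (by omega) (by omega)
      have := hx.2
      rw [← hb] at *
      linarith
    have hneg : ∏ j ∈ Finset.Ico (2*k+1) (2*g+2), (x - E j)
        = -∏ j ∈ Finset.Ico (2*k+1) (2*g+2), (E j - x) := by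
      have hcongr : ∏ j ∈ Finset.Ico (2*k+1) (2*g+2), (x - E j)
          = ∏ j ∈ Finset.Ico (2*k+1) (2*g+2), (-1 : ℝ) * (E j - x) :=
        Finset.prod_congr rfl (fun j _ => by ring)
      rw [hcongr, Finset.prod_mul_distrib, Finset.prod_const]
      have hcard : (Finset.Ico (2*k+1) (2*g+2)).card = 2*(g-k)+1 := by
        rw [Nat.card_Ico]; omega
      rw [hcard, Odd.neg_one_pow ⟨g-k, by ring⟩]
      ring
    rw [hS]
    simp only
    rw [hs2, Finset.prod_union hdisj, hneg]
    have := mul_pos hP1 hP3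
    nlinarith
  -- compactness: min of S
  obtain ⟨x₀, hx₀, hmin⟩ := (isCompact_Icc (a := a) (b := b)).exists_isMinOn
    ⟨a, left_mem_Icc.2 hab.le⟩ hcontS.continuousOn
  refine ⟨S x₀, hSpos x₀ hx₀, fun x hx => ?_⟩
  rw [hfact x]
  have h1 : S x₀ ≤ S x := hmin hx
  have h2 : 0 ≤ x - a := by linarith [hx.1]
  have h3 : 0 ≤ b - x := by linarith [hx.2]
  nlinarith [mul_nonneg (mul_nonneg h2 h3) (sub_nonneg.2 h1)]

/-- nondegeneracy of the a-period map. If a real polynomial `P` of degree at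
most `g - 1` satisfies `∫_{E_{2k-1}}^{E_{2k}} P(λ)/√(R(λ)) dλ = 0` for every `1 ≤ k ≤ g`,
then `P = 0`. -/
theorem aPeriod_nondegenerate (g : ℕ) (hg : 1 ≤ g) (E : ℕ → ℝ)
    (hE : ∀ i j : ℕ, i < j → j ≤ 2 * g + 1 → E i < E j)
    (P : Polynomial ℝ) (hdeg : P.degree ≤ ((g - 1 : ℕ) : WithBot ℕ))
    (hint : ∀ k : ℕ, 1 ≤ k → k ≤ g →
      (∫ lam in (E (2 * k - 1))..(E (2 * k)),
        P.eval lam / Real.sqrt (∏ j ∈ Finset.range (2 * g + 2), (lam - E j))) = 0) :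
    P = 0 := by
  by_contra hP
  -- In each gap, P has a root.
  have hroot : ∀ k : ℕ, 1 ≤ k → k ≤ g →
      ∃ x, x ∈ Ioo (E (2*k-1)) (E (2*k)) ∧ P.eval x = 0 := by
    intro k hk1 hkg
    by_contra hno
    push_neg at hno
    set a := E (2*k-1) with ha
    set b := E (2*k) with hb
    set r : ℝ → ℝ := fun x => ∏ j ∈ Finset.range (2*g+2), (x - E j) with hr
    have hab : a < b := hE _ _ (by omega) (by omega)
    obtain ⟨c, hc, hlow⟩ := gap_lower_bound hk1 hkg hE
    have hrcont : Continuous r :=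
      continuous_finset_prod _ fun j _ => continuous_id.sub continuous_const
    have hfi : IntervalIntegrable (fun x => P.eval x / Real.sqrt (r x)) volume a b :=
      integrable_div_sqrt hab hc P.continuous hrcont hlow
    have hrpos : ∀ x ∈ Ioo a b, 0 < r x := by
      intro x hx
      refine lt_of_lt_of_le ?_ (hlow x ⟨hx.1.le, hx.2.le⟩)
      have h1 : 0 < x - a := by linarith [hx.1]
      have h2 : 0 < b - x := by linarith [hx.2]
      positivity
    have hm : (a+b)/2 ∈ Ioo a b := ⟨by linarith, by linarith⟩
    have hzero : (∫ x in a..b, P.eval x / Real.sqrt (r x)) = 0 := hint k hk1 hkg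
    have hsign : (∀ x ∈ Ioo a b, 0 < P.eval x) ∨ (∀ x ∈ Ioo a b, P.eval x < 0) := by
      rcases (hno _ hm).lt_or_gt with hneg | hpos
      · right
        intro x hx
        rcases (hno x hx).lt_or_gt with h | hgt
        · exact h
        · exfalso
          have hsub : uIcc x ((a+b)/2) ⊆ Ioo a b :=
            (Set.ordConnected_Ioo).uIcc_subset hx hm
          have hivt := intermediate_value_uIcc
            (f := fun y => P.eval y) (P.continuous.continuousOn (s := uIcc x ((a+b)/2)))
          have h0 : (0:ℝ) ∈ uIcc (P.eval x) (P.eval ((a+b)/2)) := by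
            rw [Set.mem_uIcc]; right; exact ⟨hneg.le, hgt.le⟩
          obtain ⟨y, hy, hy0⟩ := hivt h0
          exact hno y (hsub hy) hy0
      · left
        intro x hx
        rcases (hno x hx).lt_or_gt with hlt | h
        · exfalso
          have hsub : uIcc x ((a+b)/2) ⊆ Ioo a b :=
            (Set.ordConnected_Ioo).uIcc_subset hx hm
          have hivt := intermediate_value_uIcc
            (f := fun y => P.eval y) (P.continuous.continuousOn (s := uIcc x ((a+b)/2)))
          have h0 : (0:ℝ) ∈ uIcc (P.eval x) (P.eval ((a+b)/2)) := by
            rw [Set.mem_uIcc]; left; exact ⟨hlt.le, hpos.le⟩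
          obtain ⟨y, hy, hy0⟩ := hivt h0
          exact hno y (hsub hy) hy0
        · exact h
    rcases hsign with hpos | hneg
    · have := intervalIntegral_pos_of_pos_on hfi
        (fun x hx => div_pos (hpos x hx) (Real.sqrt_pos.2 (hrpos x hx))) hab
      rw [hzero] at this
      exact lt_irrefl 0 this
    · have hfin : IntervalIntegrable (fun x => -(P.eval x / Real.sqrt (r x))) volume a b :=
        hfi.neg
      have hpos' : ∀ x ∈ Ioo a b, 0 < -(P.eval x / Real.sqrt (r x)) := fun x hx =>
        neg_pos.2 (div_neg_of_neg_of_pos (hneg x hx) (Real.sqrt_pos.2 (hrpos x hx)))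
      have h := intervalIntegral_pos_of_pos_on hfin hpos' hab
      rw [intervalIntegral.integral_neg, hzero, neg_zero] at h
      exact lt_irrefl 0 h
  -- choose roots
  set ρ : ℕ → ℝ := fun k => if h : 1 ≤ k ∧ k ≤ g then (hroot k h.1 h.2).choose else 0 with hρdef
  have hρ : ∀ k ∈ Finset.Icc 1 g,
      ρ k ∈ Ioo (E (2*k-1)) (E (2*k)) ∧ P.eval (ρ k) = 0 := by
    intro k hk
    rw [Finset.mem_Icc] at hk
    simp only [hρdef, dif_pos hk]
    exact (hroot k hk.1 hk.2).choose_spec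
  have hmono : ∀ k k', k ∈ Finset.Icc 1 g → k' ∈ Finset.Icc 1 g → k < k' → ρ k < ρ k' := by
    intro k k' hk hk' hlt
    have h1 := (hρ k hk).1.2
    have h2 := (hρ k' hk').1.1
    rw [Finset.mem_Icc] at hk hk'
    have h3 : E (2*k) < E (2*k'-1) := hE _ _ (by omega) (by omega)
    linarith
  have hinj : Set.InjOn ρ (Finset.Icc 1 g) := by
    intro x hx y hy hxy
    rcases lt_trichotomy x y with h | h | h
    · exact absurd hxy (hmono x y hx hy h).ne
    · exact h
    · exact absurd hxy.symm (hmono y x hy hx h).ne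
  have hcard : ((Finset.Icc 1 g).image ρ).card = g := by
    rw [Finset.card_image_of_injOn hinj, Nat.card_Icc]
    omega
  have hsub : (Finset.Icc 1 g).image ρ ⊆ P.roots.toFinset := by
    intro y hy
    simp only [Finset.mem_image] at hy
    obtain ⟨k, hk, rfl⟩ := hy
    rw [Multiset.mem_toFinset, Polynomial.mem_roots hP]
    exact (hρ k hk).2
  have h1 : g ≤ P.roots.toFinset.card := hcard ▸ Finset.card_le_card hsub
  have h2 : P.roots.toFinset.card ≤ Multiset.card P.roots := P.roots.toFinset_card_le
  have h3 : Multiset.card P.roots ≤ P.natDegree := P.card_roots'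
  have h4 : P.natDegree ≤ g - 1 := Polynomial.natDegree_le_iff_degree_le.mpr hdeg
  omega
end

section
/- For every vector (c_1, …, c_g) ∈ ℝ^g there exists a unique polynomial P with real coefficients of degree at most g − 1 such that ∫_{E_{2k−1}}^{E_{2k}} P(λ) / √(R(λ)) dλ = c_k for every 1 ≤ k ≤ g. (This provides the normalization polynomials determining the canonical basis of holomorphic differentials on the hyperelliptic surface, via prescription of all a-periods.) -/
open Complex Filter Set MeasureTheory intervalIntegral

private lemma rpow_shift_integrable (a b c : ℝ) :
    IntervalIntegrable (fun x : ℝ => (x - c) ^ (-(1/2) : ℝ)) volume a b := by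
  simpa using (intervalIntegral.intervalIntegrable_rpow' (a := a - c) (b := b - c)
    (by norm_num : (-1:ℝ) < -(1/2))).comp_sub_right c

private lemma rpow_shift_integrable' (a b c : ℝ) :
    IntervalIntegrable (fun x : ℝ => (c - x) ^ (-(1/2) : ℝ)) volume a b := by
  simpa using (intervalIntegral.intervalIntegrable_rpow' (a := c - a) (b := c - b)
    (by norm_num : (-1:ℝ) < -(1/2))).comp_sub_left c

private lemma integrable_of_bound (f r : ℝ → ℝ) (a b : ℝ) (hab : a ≤ b)
    (hm : Measurable f) (hr : IntervalIntegrable r volume a b)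
    (hbound : ∀ x ∈ Ioc a b, |f x| ≤ |r x|) :
    IntervalIntegrable f volume a b := by
  refine hr.mono_fun hm.aestronglyMeasurable ?_
  rw [uIoc_of_le hab, Filter.EventuallyLE, ae_restrict_iff' measurableSet_Ioc]
  exact Filter.Eventually.of_forall (by simpa [Real.norm_eq_abs] using hbound)

private lemma prod_Ico_sub_eq (E : ℕ → ℝ) (x : ℝ) (l n : ℕ) :
    ∏ j ∈ Finset.Ico l n, (x - E j)
      = (-1 : ℝ) ^ (n - l) * ∏ j ∈ Finset.Ico l n, (E j - x) := by
  have h : ∀ j ∈ Finset.Ico l n, x - E j = (-1) * (E j - x) := fun j _ => by ring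
  rw [Finset.prod_congr rfl h, Finset.prod_mul_distrib, Finset.prod_const, Nat.card_Ico]

private lemma R_pos (g k : ℕ) (hk : k < g) (E : ℕ → ℝ)
    (hE : ∀ i j : ℕ, i < j → j ≤ 2 * g + 1 → E i < E j)
    (x : ℝ) (hax : E (2 * k + 1) < x) (hxb : x < E (2 * k + 2)) :
    0 < ∏ j ∈ Finset.range (2 * g + 2), (x - E j) := by
  rw [← Finset.prod_range_mul_prod_Ico (fun j => x - E j) (show 2*k+2 ≤ 2*g+2 by omega)]
  have h1 : 0 < ∏ j ∈ Finset.range (2*k+2), (x - E j) := by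
    apply Finset.prod_pos
    intro j hj
    rw [Finset.mem_range] at hj
    have hle : E j ≤ E (2*k+1) := by
      rcases Nat.lt_or_ge j (2*k+1) with h|h
      · exact (hE j (2*k+1) h (by omega)).le
      · have : j = 2*k+1 := by omega
        simp [this]
    linarith
  have h2 : 0 < ∏ j ∈ Finset.Ico (2*k+2) (2*g+2), (x - E j) := by
    rw [prod_Ico_sub_eq]
    have hcard : (2*g+2) - (2*k+2) = 2*(g-k) := by omega
    have hpow : ((-1 : ℝ)) ^ ((2*g+2) - (2*k+2)) = 1 := by
      rw [hcard, pow_mul]; norm_num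
    rw [hpow, one_mul]
    apply Finset.prod_pos
    intro j hj
    rw [Finset.mem_Ico] at hj
    have hle : E (2*k+2) ≤ E j := by
      rcases Nat.lt_or_ge (2*k+2) j with h|h
      · exact (hE _ _ h (by omega)).le
      · have : j = 2*k+2 := by omega
        simp [this]
    linarith
  exact mul_pos h1 h2

private lemma gap_integrable (g k : ℕ) (hk : k < g) (E : ℕ → ℝ)
    (hE : ∀ i j : ℕ, i < j → j ≤ 2 * g + 1 → E i < E j) (P : Polynomial ℝ) :
    IntervalIntegrable
      (fun x => P.eval x / Real.sqrt (∏ j ∈ Finset.range (2 * g + 2), (x - E j)))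
      volume (E (2 * k + 1)) (E (2 * k + 2)) := by
  have hab : E (2*k+1) < E (2*k+2) := hE _ _ (by omega) (by omega)
  have hfm : Measurable fun x =>
      P.eval x / Real.sqrt (∏ j ∈ Finset.range (2 * g + 2), (x - E j)) := by
    apply Measurable.div
    · exact (Polynomial.continuous P).measurable
    · exact (Real.continuous_sqrt.comp
        (continuous_finset_prod _ fun j _ => continuous_id.sub continuous_const)).measurable
  set a := E (2*k+1) with ha
  set b := E (2*k+2) with hb
  set m := (a + b) / 2 with hm
  have ham : a < m := by rw [hm]; linarith
  have hmb : m < b := by rw [hm]; linarith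
  -- left half
  have hleft : IntervalIntegrable
      (fun x => P.eval x / Real.sqrt (∏ j ∈ Finset.range (2 * g + 2), (x - E j)))
      volume a m := by
    have hRS : ∀ x : ℝ, (∏ j ∈ Finset.range (2 * g + 2), (x - E j))
        = (x - a) * ((∏ j ∈ Finset.range (2*k+1), (x - E j)) *
            ∏ j ∈ Finset.Ico (2*k+2) (2*g+2), (x - E j)) := by
      intro x
      rw [← Finset.prod_range_mul_prod_Ico (fun j => x - E j) (show 2*k+1 ≤ 2*g+2 by omega),
        Finset.prod_eq_prod_Ico_succ_bot (show 2*k+1 < 2*g+2 by omega), ha]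
      ring
    set S : ℝ → ℝ := fun x => (∏ j ∈ Finset.range (2*k+1), (x - E j)) *
        ∏ j ∈ Finset.Ico (2*k+2) (2*g+2), (x - E j) with hS
    have hScont : Continuous S := by
      apply Continuous.mul <;>
        exact continuous_finset_prod _ fun j _ => continuous_id.sub continuous_const
    have hSpos : ∀ x ∈ Icc a m, 0 < S x := by
      intro x hx
      have h1 : 0 < ∏ j ∈ Finset.range (2*k+1), (x - E j) := by
        apply Finset.prod_pos
        intro j hj
        rw [Finset.mem_range] at hj
        have : E j < E (2*k+1) := hE j (2*k+1) hj (by omega)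
        have := hx.1
        rw [ha] at *
        linarith
      have h2 : 0 < ∏ j ∈ Finset.Ico (2*k+2) (2*g+2), (x - E j) := by
        rw [prod_Ico_sub_eq]
        have hpow : ((-1 : ℝ)) ^ ((2*g+2) - (2*k+2)) = 1 := by
          rw [show (2*g+2) - (2*k+2) = 2*(g-k) by omega, pow_mul]; norm_num
        rw [hpow, one_mul]
        apply Finset.prod_pos
        intro j hj
        rw [Finset.mem_Ico] at hj
        have hle : E (2*k+2) ≤ E j := by
          rcases Nat.lt_or_ge (2*k+2) j with h|h
          · exact (hE _ _ h (by omega)).le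
          · have : j = 2*k+2 := by omega
            simp [this]
        have := hx.2
        rw [← hb] at hle
        linarith
      exact mul_pos h1 h2
    obtain ⟨x₀, hx₀, hmin⟩ := isCompact_Icc.exists_isMinOn (nonempty_Icc.2 ham.le)
      hScont.continuousOn
    set c₀ := S x₀ with hc₀
    have hc₀pos : 0 < c₀ := hSpos x₀ hx₀
    obtain ⟨x₁, hx₁, hmax⟩ := isCompact_Icc.exists_isMaxOn (nonempty_Icc.2 ham.le)
      ((Polynomial.continuous P).abs.continuousOn (s := Icc a m))
    set M := |P.eval x₁| with hM
    have hMnn : 0 ≤ M := abs_nonneg _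
    refine integrable_of_bound _ (fun x => (M / Real.sqrt c₀) * (x - a) ^ (-(1/2) : ℝ))
      a m ham.le hfm ((rpow_shift_integrable a m a).const_mul _) ?_
    intro x hx
    have hxa : 0 < x - a := by have := hx.1; linarith
    have hSx : c₀ ≤ S x := hmin (Ioc_subset_Icc_self hx)
    have hPx : |P.eval x| ≤ M := hmax (Ioc_subset_Icc_self hx)
    have hRx : (x - a) * c₀ ≤ ∏ j ∈ Finset.range (2 * g + 2), (x - E j) := by
      rw [hRS x]
      exact mul_le_mul_of_nonneg_left hSx hxa.le
    have hsq : Real.sqrt c₀ * Real.sqrt (x - a)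
        ≤ Real.sqrt (∏ j ∈ Finset.range (2 * g + 2), (x - E j)) := by
      rw [← Real.sqrt_mul hc₀pos.le]
      apply Real.sqrt_le_sqrt
      calc c₀ * (x - a) = (x - a) * c₀ := by ring
        _ ≤ _ := hRx
    have hden : 0 < Real.sqrt c₀ * Real.sqrt (x - a) :=
      mul_pos (Real.sqrt_pos.2 hc₀pos) (Real.sqrt_pos.2 hxa)
    have key : |P.eval x / Real.sqrt (∏ j ∈ Finset.range (2 * g + 2), (x - E j))|
        ≤ M / Real.sqrt c₀ * (x - a) ^ (-(1/2) : ℝ) := by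
      rw [abs_div, _root_.abs_of_nonneg (Real.sqrt_nonneg _)]
      have h1 : |P.eval x| / Real.sqrt (∏ j ∈ Finset.range (2 * g + 2), (x - E j))
          ≤ M / (Real.sqrt c₀ * Real.sqrt (x - a)) :=
        div_le_div₀ hMnn hPx hden hsq
      refine h1.trans (le_of_eq ?_)
      rw [Real.rpow_neg hxa.le, ← Real.sqrt_eq_rpow, div_mul_eq_div_div, div_eq_mul_inv]
    refine key.trans (le_abs_self _)
  -- right half
  have hright : IntervalIntegrable
      (fun x => P.eval x / Real.sqrt (∏ j ∈ Finset.range (2 * g + 2), (x - E j)))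
      volume m b := by
    have hRS : ∀ x : ℝ, (∏ j ∈ Finset.range (2 * g + 2), (x - E j))
        = (b - x) * ((∏ j ∈ Finset.range (2*k+2), (x - E j)) *
            (- ∏ j ∈ Finset.Ico (2*k+3) (2*g+2), (x - E j))) := by
      intro x
      rw [← Finset.prod_range_mul_prod_Ico (fun j => x - E j) (show 2*k+2 ≤ 2*g+2 by omega),
        Finset.prod_eq_prod_Ico_succ_bot (show 2*k+2 < 2*g+2 by omega), hb]
      ring
    set S : ℝ → ℝ := fun x => (∏ j ∈ Finset.range (2*k+2), (x - E j)) *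
        (- ∏ j ∈ Finset.Ico (2*k+3) (2*g+2), (x - E j)) with hS
    have hScont : Continuous S := by
      apply Continuous.mul
      · exact continuous_finset_prod _ fun j _ => continuous_id.sub continuous_const
      · exact (continuous_finset_prod _ fun j _ => continuous_id.sub continuous_const).neg
    have hSpos : ∀ x ∈ Icc m b, 0 < S x := by
      intro x hx
      have h1 : 0 < ∏ j ∈ Finset.range (2*k+2), (x - E j) := by
        apply Finset.prod_pos
        intro j hj
        rw [Finset.mem_range] at hj
        have hle : E j ≤ E (2*k+1) := by
          rcases Nat.lt_or_ge j (2*k+1) with h|h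
          · exact (hE j (2*k+1) h (by omega)).le
          · have : j = 2*k+1 := by omega
            simp [this]
        have := hx.1
        rw [← ha] at hle
        linarith
      have h2 : 0 < - ∏ j ∈ Finset.Ico (2*k+3) (2*g+2), (x - E j) := by
        rw [prod_Ico_sub_eq]
        have hpow : ((-1 : ℝ)) ^ ((2*g+2) - (2*k+3)) = -1 := by
          rw [show (2*g+2) - (2*k+3) = 2*(g-k-1)+1 by omega, pow_succ, pow_mul]
          norm_num
        rw [hpow, neg_mul, one_mul, neg_neg]
        apply Finset.prod_pos
        intro j hj
        rw [Finset.mem_Ico] at hj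
        have hgt : E (2*k+2) < E j := hE _ _ (by omega) (by omega)
        have := hx.2
        rw [← hb] at hgt
        linarith
      exact mul_pos h1 h2
    obtain ⟨x₀, hx₀, hmin⟩ := isCompact_Icc.exists_isMinOn (nonempty_Icc.2 hmb.le)
      hScont.continuousOn
    set c₀ := S x₀ with hc₀
    have hc₀pos : 0 < c₀ := hSpos x₀ hx₀
    obtain ⟨x₁, hx₁, hmax⟩ := isCompact_Icc.exists_isMaxOn (nonempty_Icc.2 hmb.le)
      ((Polynomial.continuous P).abs.continuousOn (s := Icc m b))
    set M := |P.eval x₁| with hM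
    have hMnn : 0 ≤ M := abs_nonneg _
    refine integrable_of_bound _ (fun x => (M / Real.sqrt c₀) * (b - x) ^ (-(1/2) : ℝ))
      m b hmb.le hfm ((rpow_shift_integrable' m b b).const_mul _) ?_
    intro x hx
    rcases eq_or_lt_of_le hx.2 with heq|hxb
    · -- x = b : both sides vanish / LHS is zero
      have hzero : (∏ j ∈ Finset.range (2 * g + 2), (x - E j)) = 0 :=
        Finset.prod_eq_zero (Finset.mem_range.2 (show 2*k+2 < 2*g+2 by omega))
          (by rw [heq, hb, sub_self])
      rw [hzero, Real.sqrt_zero, div_zero, abs_zero]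
      exact abs_nonneg _
    have hxa : 0 < b - x := by linarith
    have hSx : c₀ ≤ S x := hmin ⟨hx.1.le, hx.2⟩
    have hPx : |P.eval x| ≤ M := hmax ⟨hx.1.le, hx.2⟩
    have hRx : (b - x) * c₀ ≤ ∏ j ∈ Finset.range (2 * g + 2), (x - E j) := by
      rw [hRS x]
      exact mul_le_mul_of_nonneg_left hSx hxa.le
    have hsq : Real.sqrt c₀ * Real.sqrt (b - x)
        ≤ Real.sqrt (∏ j ∈ Finset.range (2 * g + 2), (x - E j)) := by
      rw [← Real.sqrt_mul hc₀pos.le]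
      apply Real.sqrt_le_sqrt
      calc c₀ * (b - x) = (b - x) * c₀ := by ring
        _ ≤ _ := hRx
    have hden : 0 < Real.sqrt c₀ * Real.sqrt (b - x) :=
      mul_pos (Real.sqrt_pos.2 hc₀pos) (Real.sqrt_pos.2 hxa)
    have key : |P.eval x / Real.sqrt (∏ j ∈ Finset.range (2 * g + 2), (x - E j))|
        ≤ M / Real.sqrt c₀ * (b - x) ^ (-(1/2) : ℝ) := by
      rw [abs_div, _root_.abs_of_nonneg (Real.sqrt_nonneg _)]
      have h1 : |P.eval x| / Real.sqrt (∏ j ∈ Finset.range (2 * g + 2), (x - E j))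
          ≤ M / (Real.sqrt c₀ * Real.sqrt (b - x)) :=
        div_le_div₀ hMnn hPx hden hsq
      refine h1.trans (le_of_eq ?_)
      rw [Real.rpow_neg hxa.le, ← Real.sqrt_eq_rpow, div_mul_eq_div_div, div_eq_mul_inv]
    refine key.trans (le_abs_self _)
  exact hleft.trans hright

private lemma withbot_le_iff_lt (g : ℕ) (hg : 1 ≤ g) (x : WithBot ℕ) :
    x ≤ ((g - 1 : ℕ) : WithBot ℕ) ↔ x < ((g : ℕ) : WithBot ℕ) := by
  cases x with
  | bot =>
    simp only [bot_le, true_iff]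
    exact WithBot.bot_lt_coe _
  | coe n =>
    rw [Nat.cast_withBot, Nat.cast_withBot, WithBot.coe_le_coe, WithBot.coe_lt_coe]
    omega

/-- for every vector `(c_1, …, c_g) ∈ ℝ^g` there is a unique real polynomial
`P` of degree at most `g - 1` with prescribed a-periods
`∫_{E_{2k-1}}^{E_{2k}} P(λ)/√(R(λ)) dλ = c_k`, `1 ≤ k ≤ g` (here the gap with index
`k.val + 1` has endpoints `E (2k+1)` and `E (2k+2)` for `k : Fin g`). -/
theorem aPeriod_prescription (g : ℕ) (hg : 1 ≤ g) (E : ℕ → ℝ)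
    (hE : ∀ i j : ℕ, i < j → j ≤ 2 * g + 1 → E i < E j)
    (c : Fin g → ℝ) :
    ∃! P : Polynomial ℝ, P.degree ≤ ((g - 1 : ℕ) : WithBot ℕ) ∧
      ∀ k : Fin g,
        (∫ lam in (E (2 * (k : ℕ) + 1))..(E (2 * (k : ℕ) + 2)),
          P.eval lam / Real.sqrt (∏ j ∈ Finset.range (2 * g + 2), (lam - E j))) = c k := by
  have hint : ∀ (P : Polynomial ℝ) (k : Fin g), IntervalIntegrable
      (fun x => P.eval x / Real.sqrt (∏ j ∈ Finset.range (2 * g + 2), (x - E j))) volume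
      (E (2 * (k : ℕ) + 1)) (E (2 * (k : ℕ) + 2)) :=
    fun P k => gap_integrable g k k.isLt E hE P
  set T : Polynomial ℝ → (Fin g → ℝ) := fun P k =>
    ∫ x in (E (2 * (k : ℕ) + 1))..(E (2 * (k : ℕ) + 2)),
      P.eval x / Real.sqrt (∏ j ∈ Finset.range (2 * g + 2), (x - E j)) with hT
  have hTadd : ∀ P Q : Polynomial ℝ, T (P + Q) = T P + T Q := by
    intro P Q
    funext k
    simp only [hT, Pi.add_apply]
    rw [← intervalIntegral.integral_add (hint P k) (hint Q k)]
    congr 1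
    funext x
    rw [Polynomial.eval_add, add_div]
  have hTsub : ∀ P Q : Polynomial ℝ, T (P - Q) = T P - T Q := by
    intro P Q
    funext k
    simp only [hT, Pi.sub_apply]
    rw [← intervalIntegral.integral_sub (hint P k) (hint Q k)]
    congr 1
    funext x
    rw [Polynomial.eval_sub, sub_div]
  have hTsmul : ∀ (r : ℝ) (P : Polynomial ℝ), T (r • P) = r • T P := by
    intro r P
    funext k
    simp only [hT, Pi.smul_apply, smul_eq_mul]
    rw [← intervalIntegral.integral_const_mul]
    congr 1
    funext x
    rw [Polynomial.eval_smul, smul_eq_mul, mul_div_assoc]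
  -- key injectivity statement
  have hinj : ∀ P : Polynomial ℝ, P.degree < ((g : ℕ) : WithBot ℕ) → T P = 0 → P = 0 := by
    intro P hdeg hTP
    by_cases hP0 : P = 0
    · exact hP0
    have hroot : ∀ k : Fin g, ∃ x, x ∈ Ioo (E (2 * (k : ℕ) + 1)) (E (2 * (k : ℕ) + 2)) ∧
        P.eval x = 0 := by
      intro k
      by_contra hno
      push_neg at hno
      have hab : E (2 * (k : ℕ) + 1) < E (2 * (k : ℕ) + 2) := hE _ _ (by omega) (by omega)
      set a := E (2 * (k : ℕ) + 1) with ha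
      set b := E (2 * (k : ℕ) + 2) with hb
      have hmem : (a + b) / 2 ∈ Ioo a b := ⟨by linarith, by linarith⟩
      have hzero : (∫ x in a..b,
          P.eval x / Real.sqrt (∏ j ∈ Finset.range (2 * g + 2), (x - E j))) = 0 :=
        congrFun hTP k
      have hsqrtpos : ∀ x ∈ Ioo a b,
          0 < Real.sqrt (∏ j ∈ Finset.range (2 * g + 2), (x - E j)) := fun x hx =>
        Real.sqrt_pos.2 (R_pos g k k.isLt E hE x hx.1 hx.2)
      -- no root means constant sign on the open gap
      have hsign : (∀ x ∈ Ioo a b, 0 < P.eval x) ∨ (∀ x ∈ Ioo a b, P.eval x < 0) := by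
        have hIVT : ∀ x ∈ Ioo a b, ∀ y ∈ Ioo a b, P.eval x < 0 → 0 < P.eval y → False := by
          intro x hx y hy hx0 hy0
          have hcont : ContinuousOn (fun t => P.eval t) (uIcc x y) :=
            (Polynomial.continuous P).continuousOn
          have h0 : (0 : ℝ) ∈ uIcc (P.eval x) (P.eval y) :=
            mem_uIcc.2 (Or.inl ⟨hx0.le, hy0.le⟩)
          obtain ⟨z, hz, hz0⟩ := intermediate_value_uIcc hcont h0
          have hzI : z ∈ Ioo a b := by
            rcases hz with ⟨hz1, hz2⟩
            constructor
            · exact lt_of_lt_of_le (lt_min hx.1 hy.1) hz1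
            · exact lt_of_le_of_lt hz2 (max_lt hx.2 hy.2)
          exact hno z hzI hz0
        rcases lt_trichotomy (P.eval ((a + b) / 2)) 0 with h|h|h
        · right
          intro x hx
          rcases lt_trichotomy (P.eval x) 0 with h'|h'|h'
          · exact h'
          · exact absurd h' (hno x hx)
          · exact absurd (hIVT _ hmem _ hx h h') (by simp)
        · exact absurd h (hno _ hmem)
        · left
          intro x hx
          rcases lt_trichotomy (P.eval x) 0 with h'|h'|h'
          · exact absurd (hIVT _ hx _ hmem h' h) (by simp)
          · exact absurd h' (hno x hx)
          · exact h'
      rcases hsign with hpos|hneg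
      · have : 0 < ∫ x in a..b,
            P.eval x / Real.sqrt (∏ j ∈ Finset.range (2 * g + 2), (x - E j)) :=
          intervalIntegral_pos_of_pos_on (hint P k)
            (fun x hx => div_pos (hpos x hx) (hsqrtpos x hx)) hab
        rw [hzero] at this
        exact lt_irrefl _ this
      · have : 0 < ∫ x in a..b,
            -(P.eval x / Real.sqrt (∏ j ∈ Finset.range (2 * g + 2), (x - E j))) :=
          intervalIntegral_pos_of_pos_on (hint P k).neg
            (fun x hx => neg_pos.2 (div_neg_of_neg_of_pos (hneg x hx) (hsqrtpos x hx))) hab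
        rw [intervalIntegral.integral_neg, hzero, neg_zero] at this
        exact lt_irrefl _ this
    choose r hr1 hr2 using hroot
    have hrinj : Function.Injective r := by
      have hmono : ∀ k k' : Fin g, k < k' → r k < r k' := by
        intro k k' hkk
        have h1 : r k < E (2 * (k : ℕ) + 2) := (hr1 k).2
        have h2 : E (2 * (k' : ℕ) + 1) < r k' := (hr1 k').1
        have h3 : E (2 * (k : ℕ) + 2) < E (2 * (k' : ℕ) + 1) := by
          have : (k : ℕ) < (k' : ℕ) := hkk
          exact hE _ _ (by omega) (by omega)
        linarith
      intro k k' h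
      rcases lt_trichotomy k k' with h'|h'|h'
      · exact absurd h (ne_of_lt (hmono _ _ h'))
      · exact h'
      · exact absurd h.symm (ne_of_lt (hmono _ _ h'))
    exact Polynomial.eq_zero_of_natDegree_lt_card_of_eval_eq_zero P hrinj hr2
      (by rw [Fintype.card_fin]; exact (Polynomial.natDegree_lt_iff_degree_lt hP0).2 hdeg)
  -- linear algebra: set up the endomorphism of ℝ^g
  set e := Polynomial.degreeLTEquiv ℝ g with he
  set M : (Fin g → ℝ) →ₗ[ℝ] (Fin g → ℝ) :=
    { toFun := fun v => T ((e.symm v : Polynomial.degreeLT ℝ g) : Polynomial ℝ)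
      map_add' := fun v w => by
        show T ((e.symm (v + w) : Polynomial.degreeLT ℝ g) : Polynomial ℝ) = _
        rw [e.symm.map_add, Submodule.coe_add, hTadd]
      map_smul' := fun s v => by
        show T ((e.symm (s • v) : Polynomial.degreeLT ℝ g) : Polynomial ℝ) = _
        rw [e.symm.map_smul, Submodule.coe_smul, hTsmul]; rfl } with hMdef
  have hMinj : Function.Injective M := by
    intro v w h
    have h2 : T (((e.symm v : Polynomial.degreeLT ℝ g) : Polynomial ℝ)
        - ((e.symm w : Polynomial.degreeLT ℝ g) : Polynomial ℝ)) = 0 := by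
      rw [hTsub]
      have : M v = M w := h
      rw [hMdef] at this
      simp only [LinearMap.coe_mk, AddHom.coe_mk] at this
      rw [this, sub_self]
    have hd : (((e.symm v : Polynomial.degreeLT ℝ g) : Polynomial ℝ)
        - ((e.symm w : Polynomial.degreeLT ℝ g) : Polynomial ℝ)) ∈ Polynomial.degreeLT ℝ g :=
      sub_mem (e.symm v).2 (e.symm w).2
    have h3 := hinj _ (Polynomial.mem_degreeLT.1 hd) h2
    have h4 : e.symm v = e.symm w := Subtype.ext (sub_eq_zero.mp h3)
    exact e.symm.injective h4
  have hMsurj : Function.Surjective M := LinearMap.injective_iff_surjective.mp hMinj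
  obtain ⟨v, hv⟩ := hMsurj c
  refine ⟨((e.symm v : Polynomial.degreeLT ℝ g) : Polynomial ℝ), ⟨?_, ?_⟩, ?_⟩
  · exact (withbot_le_iff_lt g hg _).2 (Polynomial.mem_degreeLT.1 (e.symm v).2)
  · intro k
    exact congrFun hv k
  · intro Q ⟨hQdeg, hQint⟩
    have hQmem : Q ∈ Polynomial.degreeLT ℝ g :=
      Polynomial.mem_degreeLT.2 ((withbot_le_iff_lt g hg _).1 hQdeg)
    have hTQ : T Q = c := funext hQint
    have hTP : T ((e.symm v : Polynomial.degreeLT ℝ g) : Polynomial ℝ) = c := hv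
    have hdiff : T (Q - ((e.symm v : Polynomial.degreeLT ℝ g) : Polynomial ℝ)) = 0 := by
      rw [hTsub, hTQ, hTP, sub_self]
    have hdmem : Q - ((e.symm v : Polynomial.degreeLT ℝ g) : Polynomial ℝ)
        ∈ Polynomial.degreeLT ℝ g := sub_mem hQmem (e.symm v).2
    have := hinj _ (Polynomial.mem_degreeLT.1 hdmem) hdiff
    exact sub_eq_zero.mp this
end

section
/- Let ρ ∈ ℝ ∖ [E_0, E_{2g+1}] or ρ in an open gap (E_{2k−1}, E_{2k}), 1 ≤ k ≤ g, and let P be a polynomial with real coefficients. Then for every 0 ≤ k ≤ g and every real λ in the open band (E_{2k}, E_{2k+1}) with λ ≠ ρ, the complex number ( R^{1/2}(ρ)/(λ − ρ) + P(λ) ) / R^{1/2}(λ) has real part zero, where R^{1/2}(λ) denotes the boundary value of R^{1/2} from the upper half plane (which equals the value of the defining formula at λ). (This says that the coefficient of the normalized Abelian differential of the third kind ω_{ρρ*}, with real poles ρ, ρ* and real normalization polynomial, is purely imaginary on the boundary of the upper sheet; it is the key step showing that the Green function g(·, ρ) of Π₊ vanishes on the boundary and that the Blaschke factor B(·, ρ)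 has modulus one on Σ.) -/
open Complex Filter Set

lemma cpow_half_of_pos {t : ℝ} (ht : 0 < t) :
    ((t : ℂ)) ^ ((1 : ℂ) / 2) = (Real.sqrt t : ℂ) := by
  have h : ((1 : ℂ) / 2) = (2⁻¹ : ℂ) := by norm_num
  rw [h]
  apply Complex.ext
  · rw [Complex.cpow_inv_two_re]
    simp [Complex.norm_real, Real.norm_eq_abs, abs_of_pos ht, add_self_div_two]
  · rw [Complex.cpow_inv_two_im_eq_sqrt (by simp)]
    simp [Complex.norm_real, Real.norm_eq_abs, abs_of_pos ht]

lemma cpow_half_of_neg {t : ℝ} (ht : t < 0) :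
    ((t : ℂ)) ^ ((1 : ℂ) / 2) = (Real.sqrt (-t) : ℂ) * I := by
  have h : ((1 : ℂ) / 2) = (2⁻¹ : ℂ) := by norm_num
  rw [h]
  apply Complex.ext
  · rw [Complex.cpow_inv_two_re]
    simp [Complex.norm_real, Real.norm_eq_abs, abs_of_neg ht]
  · rw [Complex.cpow_inv_two_im_eq_sqrt (by simp)]
    have h2 : (|t| - t) / 2 = -t := by rw [abs_of_neg ht]; ring
    simp only [Complex.norm_real, Real.norm_eq_abs, Complex.ofReal_re, h2]
    simp [Complex.mul_im]

lemma Rhalf_form (g n : ℕ) (E : ℕ → ℝ) (x : ℝ) (hn : n ≤ 2 * g + 2)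
    (hlt : ∀ j, j < n → E j < x) (hgt : ∀ j, n ≤ j → j < 2 * g + 2 → x < E j) :
    ∃ r : ℝ, Rhalf g E (x : ℂ) = -(I ^ (2 * g + 2 - n) * (r : ℂ)) := by
  refine ⟨(∏ j ∈ Finset.range n, Real.sqrt (x - E j)) *
      ∏ j ∈ Finset.Ico n (2 * g + 2), Real.sqrt (E j - x), ?_⟩
  unfold Rhalf
  rw [← Finset.prod_range_mul_prod_Ico _ hn]
  have h1 : ∏ j ∈ Finset.range n, ((x : ℂ) - (E j : ℂ)) ^ ((1 : ℂ) / 2)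
      = ((∏ j ∈ Finset.range n, Real.sqrt (x - E j) : ℝ) : ℂ) := by
    rw [Complex.ofReal_prod]
    refine Finset.prod_congr rfl fun j hj => ?_
    rw [Finset.mem_range] at hj
    rw [show (x : ℂ) - (E j : ℂ) = ((x - E j : ℝ) : ℂ) by push_cast; ring]
    exact cpow_half_of_pos (by linarith [hlt j hj])
  have h2 : ∏ j ∈ Finset.Ico n (2 * g + 2), ((x : ℂ) - (E j : ℂ)) ^ ((1 : ℂ) / 2)
      = I ^ (2 * g + 2 - n) *
        ((∏ j ∈ Finset.Ico n (2 * g + 2), Real.sqrt (E j - x) : ℝ) : ℂ) := by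
    have : ∀ j ∈ Finset.Ico n (2 * g + 2),
        ((x : ℂ) - (E j : ℂ)) ^ ((1 : ℂ) / 2) = (Real.sqrt (E j - x) : ℂ) * I := by
      intro j hj
      rw [Finset.mem_Ico] at hj
      rw [show (x : ℂ) - (E j : ℂ) = ((x - E j : ℝ) : ℂ) by push_cast; ring]
      rw [cpow_half_of_neg (by linarith [hgt j hj.1 hj.2])]
      norm_num
    rw [Finset.prod_congr rfl this, Finset.prod_mul_distrib, Finset.prod_const,
      Nat.card_Ico, Complex.ofReal_prod]
    ring
  rw [h1, h2]
  push_cast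
  ring

lemma Ipow_even (t : ℕ) : (I : ℂ) ^ (2 * t) = (((-1 : ℝ) ^ t : ℝ) : ℂ) := by
  rw [pow_mul, I_sq]; push_cast; ring

lemma Ipow_odd (t : ℕ) : (I : ℂ) ^ (2 * t + 1) = (((-1 : ℝ) ^ t : ℝ) : ℂ) * I := by
  rw [pow_succ, Ipow_even]

/-- for a real pole `ρ` outside `[E_0, E_{2g+1}]` or in an open gap, and a
real normalization polynomial `P`, the coefficient `(R^{1/2}(ρ)/(λ-ρ) + P(λ)) / R^{1/2}(λ)`
of the Abelian differential `ω_{ρρ*}` is purely imaginary at every interior band point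
`λ ∈ (E_{2k}, E_{2k+1})`, `λ ≠ ρ` (with `R^{1/2}(λ)` the boundary value from above, which
equals the value of the defining formula at `λ`). -/
theorem abelian_third_kind_purely_imaginary (g : ℕ) (hg : 1 ≤ g) (E : ℕ → ℝ)
    (hE : ∀ i j : ℕ, i < j → j ≤ 2 * g + 1 → E i < E j)
    (ρ : ℝ)
    (hρ : ρ < E 0 ∨ E (2 * g + 1) < ρ ∨
          ∃ k : ℕ, 1 ≤ k ∧ k ≤ g ∧ E (2 * k - 1) < ρ ∧ ρ < E (2 * k))
    (P : Polynomial ℝ)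
    (k : ℕ) (hk : k ≤ g) (lam : ℝ)
    (h1 : E (2 * k) < lam) (h2 : lam < E (2 * k + 1)) (hne : lam ≠ ρ) :
    ((Rhalf g E (ρ : ℂ) / ((lam : ℂ) - (ρ : ℂ)) + ((P.eval lam : ℝ) : ℂ)) /
        Rhalf g E (lam : ℂ)).re = 0 := by
  -- Rhalf at ρ is real
  have hρreal : ∃ s : ℝ, Rhalf g E (ρ : ℂ) = (s : ℂ) := by
    rcases hρ with h | h | ⟨k', hk1, hk2, hgap1, hgap2⟩
    · obtain ⟨r, hr⟩ := Rhalf_form g 0 E ρ (by omega) (by omega) (fun j _ hj => by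
        rcases Nat.eq_zero_or_pos j with rfl | hj0
        · exact h
        · exact lt_trans h (hE 0 j hj0 (by omega)))
      refine ⟨-((-1 : ℝ) ^ (g + 1) * r), ?_⟩
      rw [hr, show 2 * g + 2 - 0 = 2 * (g + 1) by omega, Ipow_even]
      push_cast; ring
    · obtain ⟨r, hr⟩ := Rhalf_form g (2 * g + 2) E ρ le_rfl (fun j hj => by
        rcases Nat.lt_or_ge j (2 * g + 1) with hj' | hj'
        · exact lt_trans (hE j (2 * g + 1) hj' le_rfl) h
        · have : j = 2 * g + 1 := by omega
          rw [this]; exact h) (fun j hj hj' => by omega)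
      refine ⟨-r, ?_⟩
      rw [hr, show 2 * g + 2 - (2 * g + 2) = 0 by omega]
      push_cast; ring
    · obtain ⟨r, hr⟩ := Rhalf_form g (2 * k') E ρ (by omega) (fun j hj => by
        rcases Nat.lt_or_ge j (2 * k' - 1) with hj' | hj'
        · exact lt_trans (hE j (2 * k' - 1) hj' (by omega)) hgap1
        · have : j = 2 * k' - 1 := by omega
          rw [this]; exact hgap1) (fun j hj hj' => by
        rcases Nat.lt_or_ge (2 * k') j with hj'' | hj''
        · exact lt_trans hgap2 (hE (2 * k') j hj'' (by omega))
        · have : j = 2 * k' := by omega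
          rw [this]; exact hgap2)
      refine ⟨-((-1 : ℝ) ^ (g + 1 - k') * r), ?_⟩
      rw [hr, show 2 * g + 2 - 2 * k' = 2 * (g + 1 - k') by omega, Ipow_even]
      push_cast; ring
  -- Rhalf at lam is purely imaginary
  have hlamim : ∃ s : ℝ, Rhalf g E (lam : ℂ) = (s : ℂ) * I := by
    obtain ⟨r, hr⟩ := Rhalf_form g (2 * k + 1) E lam (by omega) (fun j hj => by
      rcases Nat.lt_or_ge j (2 * k) with hj' | hj'
      · exact lt_trans (hE j (2 * k) hj' (by omega)) h1
      · have : j = 2 * k := by omega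
        rw [this]; exact h1) (fun j hj hj' => by
      rcases Nat.lt_or_ge (2 * k + 1) j with hj'' | hj''
      · exact lt_trans h2 (hE (2 * k + 1) j hj'' (by omega))
      · have : j = 2 * k + 1 := by omega
        rw [this]; exact h2)
    refine ⟨-((-1 : ℝ) ^ (g - k) * r), ?_⟩
    rw [hr, show 2 * g + 2 - (2 * k + 1) = 2 * (g - k) + 1 by omega, Ipow_odd]
    push_cast; ring
  obtain ⟨s, hs⟩ := hρreal
  obtain ⟨u, hu⟩ := hlamim
  rw [hs, hu]
  have him : ((s : ℂ) / ((lam : ℂ) - (ρ : ℂ))).im = 0 := by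
    simp [Complex.div_im]
  rw [Complex.div_re]
  simp [him]
end

section
/- Let z₀ ∈ ℂ ∖ Σ. Then the function z ↦ (R^{1/2}(z) + R^{1/2}(z₀)) / (2(z − z₀) R^{1/2}(z)) − 1/(z − z₀), defined on (ℂ ∖ Σ) ∖ {z₀}, extends to a holomorphic function on all of ℂ ∖ Σ (the singularity at z₀ is removable). Consequently the coefficient (R^{1/2}(z) + R^{1/2}(z₀)) / (2(z − z₀) R^{1/2}(z)) of the Abelian differential ω_{p₀ E_0} of the third kind has exactly a simple pole at z₀ with residue 1 on the upper sheet, and no pole arising from the point (z₀, −) on the lower sheet. -/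
open Complex Filter Set Topology

lemma log_neg_flip {w : ℂ} (hre : w.re < 0) :
    Complex.log (-w) = Complex.log w - (if 0 ≤ w.im then 1 else -1) * (Real.pi : ℂ) * I := by
  have hw : w ≠ 0 := fun h => by simp [h] at hre
  rcases lt_trichotomy w.im 0 with him | him | him
  · rw [if_neg (not_le.mpr him)]
    simp only [Complex.log, norm_neg, Complex.arg_neg_eq_arg_add_pi_of_im_neg him]
    push_cast
    ring
  · rw [if_pos him.ge]
    have h1 : Complex.arg w = Real.pi := Complex.arg_eq_pi_iff.mpr ⟨hre, him⟩
    have h2 : Complex.arg (-w) = 0 :=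
      Complex.arg_eq_zero_iff.mpr ⟨by simpa using hre.le, by simp [him]⟩
    simp only [Complex.log, norm_neg, h1, h2]
    push_cast
    ring
  · rw [if_pos him.le]
    simp only [Complex.log, norm_neg, Complex.arg_neg_eq_arg_sub_pi_of_im_pos him]
    push_cast
    ring

lemma flip_cpow_half {w : ℂ} (hre : w.re < 0) :
    w ^ ((1:ℂ)/2) = (if 0 ≤ w.im then I else -I) * (-w) ^ ((1:ℂ)/2) := by
  have hw : w ≠ 0 := fun h => by simp [h] at hre
  have hnw : (-w) ≠ 0 := neg_ne_zero.mpr hw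
  have hI : Complex.exp (((Real.pi : ℂ)) * I * (1/2)) = I := by
    rw [show ((Real.pi : ℂ)) * I * (1/2) = (Real.pi : ℂ) / 2 * I by ring, ← Complex.log_I,
      Complex.exp_log I_ne_zero]
  rw [Complex.cpow_def_of_ne_zero hw, Complex.cpow_def_of_ne_zero hnw, log_neg_flip hre]
  rw [sub_mul, Complex.exp_sub]
  split_ifs with h
  · rw [one_mul, hI]
    field_simp
  · rw [show (-1 : ℂ) * (Real.pi : ℂ) * I * (1/2) = -((Real.pi:ℂ) * I * (1/2)) by ring,
      Complex.exp_neg, hI, inv_I]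
    field_simp

lemma endpoint_mem_bandSet (g : ℕ) (E : ℕ → ℝ)
    (hE : ∀ i j : ℕ, i < j → j ≤ 2 * g + 1 → E i < E j)
    {j : ℕ} (hj : j < 2 * g + 2) : ((E j : ℝ) : ℂ) ∈ bandSet g E := by
  have hk : j / 2 < g + 1 := by omega
  have hmem : E j ∈ Set.Icc (E (2 * (j / 2))) (E (2 * (j / 2) + 1)) := by
    rcases Nat.even_or_odd j with ⟨m, hm⟩ | ⟨m, hm⟩
    · have h2 : 2 * (j / 2) = j := by omega
      rw [h2]
      exact ⟨le_refl _, (hE j (j + 1) (by omega) (by omega)).le⟩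
    · have h2 : 2 * (j / 2) + 1 = j := by omega
      rw [h2]
      exact ⟨(hE (2 * (j / 2)) j (by omega) (by omega)).le, le_refl _⟩
  exact Set.mem_biUnion (Finset.mem_range.mpr hk) ⟨E j, hmem, rfl⟩

lemma bandSet_isClosed (g : ℕ) (E : ℕ → ℝ) : IsClosed (bandSet g E) :=
  Set.Finite.isClosed_biUnion (Finset.range (g + 1)).finite_toSet
    (fun _ _ => (isCompact_Icc.image Complex.continuous_ofReal).isClosed)

lemma Rhalf_ne_zero (g : ℕ) (E : ℕ → ℝ)
    (hE : ∀ i j : ℕ, i < j → j ≤ 2 * g + 1 → E i < E j)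
    {z : ℂ} (hz : z ∉ bandSet g E) : Rhalf g E z ≠ 0 := by
  unfold Rhalf
  rw [neg_ne_zero]
  apply Finset.prod_ne_zero_iff.mpr
  intro j hj
  have hzj : z - (E j : ℂ) ≠ 0 := by
    rw [sub_ne_zero]
    intro h
    exact hz (h ▸ endpoint_mem_bandSet g E hE (Finset.mem_range.mp hj))
  intro h
  exact hzj ((Complex.cpow_eq_zero_iff _ _).mp h).1

lemma Rhalf_differentiableOn (g : ℕ) (E : ℕ → ℝ)
    (hE : ∀ i j : ℕ, i < j → j ≤ 2 * g + 1 → E i < E j) :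
    DifferentiableOn ℂ (Rhalf g E) (bandSet g E)ᶜ := by
  classical
  intro z₁ hz₁
  apply DifferentiableAt.differentiableWithinAt
  by_cases him : z₁.im = 0
  swap
  · apply DifferentiableAt.neg
    apply DifferentiableAt.fun_finsetProd
    intro j hj
    exact (differentiableAt_id.sub_const _).cpow (differentiableAt_const _)
      (Or.inr (by simpa [Complex.sub_im] using him))
  · -- real point in a gap
    set n := 2 * g + 2 with hn
    set x := z₁.re with hx
    have hz₁x : z₁ = (x : ℂ) := Complex.ext (by simp [hx]) (by simp [him])
    have hz₁' : z₁ ∉ bandSet g E := hz₁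
    have hxE : ∀ j, j < n → E j ≠ x := by
      intro j hj h
      exact hz₁' (by rw [hz₁x, ← h]; exact endpoint_mem_bandSet g E hE hj)
    set S := (Finset.range n).filter (fun j => x < E j) with hS
    have hCeven : Even S.card := by
      rcases S.eq_empty_or_nonempty with hSe | hSe
      · simp [hSe]
      · set m := S.min' hSe with hm
        have hmS : m ∈ S := S.min'_mem hSe
        have hmn : m < n := Finset.mem_range.mp (Finset.mem_filter.mp hmS).1
        have hxm : x < E m := (Finset.mem_filter.mp hmS).2
        have hSeq : S = Finset.Ico m n := by
          ext j
          simp only [hS, Finset.mem_Ico, Finset.mem_filter, Finset.mem_range]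
          constructor
          · intro ⟨h1, h2⟩
            exact ⟨S.min'_le j (Finset.mem_filter.mpr ⟨Finset.mem_range.mpr h1, h2⟩), h1⟩
          · intro ⟨h1, h2⟩
            refine ⟨h2, ?_⟩
            rcases eq_or_lt_of_le h1 with rfl | hlt
            · exact hxm
            · exact hxm.trans (hE m j hlt (by omega))
        have hmeven : Even m := by
          by_contra hodd
          obtain ⟨k, hk⟩ := Nat.not_even_iff_odd.mp hodd
          have h2k : ¬ x < E (2 * k) := by
            intro hlt
            have hmem : 2 * k ∈ S :=
              Finset.mem_filter.mpr ⟨Finset.mem_range.mpr (by omega), hlt⟩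
            have := S.min'_le _ hmem
            omega
          have hxmem : ((x : ℝ) : ℂ) ∈ bandSet g E := by
            apply Set.mem_biUnion (Finset.mem_range.mpr (show k < g + 1 by omega))
            refine ⟨x, ⟨not_lt.mp h2k, ?_⟩, rfl⟩
            rw [show 2 * k + 1 = m by omega]
            exact hxm.le
          exact hz₁' (hz₁x ▸ hxmem)
        rw [hSeq, Nat.card_Ico]
        rw [Nat.even_sub hmn.le]
        simp only [hmeven, iff_true]
        exact ⟨g + 1, by omega⟩
    set ε := (Finset.range n).inf' (Finset.nonempty_range_iff.mpr (by omega)) (fun j => |x - E j|)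
      with hε
    have hεpos : 0 < ε := by
      rw [hε, Finset.lt_inf'_iff]
      intro j hj
      exact abs_pos.mpr (sub_ne_zero.mpr (fun h => hxE j (Finset.mem_range.mp hj) h.symm))
    have hεle : ∀ j ∈ Finset.range n, ε ≤ |x - E j| := fun j hj => Finset.inf'_le _ hj
    set F : ℂ → ℂ := fun z => -(I ^ S.card * ((S.prod fun j => ((E j : ℂ) - z) ^ ((1:ℂ)/2)) *
      (((Finset.range n).filter (fun j => ¬ x < E j)).prod
        fun j => (z - (E j : ℂ)) ^ ((1:ℂ)/2)))) with hF
    have hFdiff : DifferentiableAt ℂ F z₁ := by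
      apply DifferentiableAt.neg
      apply DifferentiableAt.const_mul
      apply DifferentiableAt.mul
      · apply DifferentiableAt.fun_finsetProd
        intro j hj
        refine ((differentiableAt_const _).sub differentiableAt_id).cpow
          (differentiableAt_const _) (Or.inl ?_)
        have hxj : x < E j := (Finset.mem_filter.mp hj).2
        simpa [Complex.sub_re, ← hx] using by linarith
      · apply DifferentiableAt.fun_finsetProd
        intro j hj
        refine (differentiableAt_id.sub_const _).cpow (differentiableAt_const _) (Or.inl ?_)
        obtain ⟨hjn, hxj⟩ := Finset.mem_filter.mp hj
        have hlt : E j < x := lt_of_le_of_ne (not_lt.mp hxj) (hxE j (Finset.mem_range.mp hjn))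
        simpa [Complex.sub_re, ← hx] using by linarith
    have heq : Rhalf g E =ᶠ[𝓝 z₁] F := by
      filter_upwards [Metric.ball_mem_nhds z₁ hεpos] with z hz
      have habs : |z.re - x| < ε := by
        have h1 : z.re - x = (z - z₁).re := by simp [hx]
        calc |z.re - x| = |(z - z₁).re| := by rw [h1]
          _ ≤ ‖z - z₁‖ := Complex.abs_re_le_norm _
          _ < ε := by rwa [← dist_eq_norm, ← Metric.mem_ball]
      set s : ℂ := if 0 ≤ z.im then I else -I with hs
      have hflip : ∀ j ∈ S, (z - (E j : ℂ)) ^ ((1:ℂ)/2) = s * (((E j : ℂ) - z) ^ ((1:ℂ)/2)) := by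
        intro j hj
        obtain ⟨hjn, hxj⟩ := Finset.mem_filter.mp hj
        have hre : (z - (E j : ℂ)).re < 0 := by
          have h1 := hεle j hjn
          have h2 : |x - E j| = E j - x := by rw [abs_of_neg (by linarith)]; ring
          have h3 := abs_lt.mp habs
          simp only [Complex.sub_re, Complex.ofReal_re]
          linarith
        rw [flip_cpow_half hre, neg_sub]
        congr 2
        simp [Complex.sub_im]
      have hsplit := Finset.prod_filter_mul_prod_filter_not (Finset.range n)
        (fun j => x < E j) (fun j => (z - (E j : ℂ)) ^ ((1:ℂ)/2))
      have hprodS : S.prod (fun j => (z - (E j : ℂ)) ^ ((1:ℂ)/2))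
          = s ^ S.card * S.prod (fun j => ((E j : ℂ) - z) ^ ((1:ℂ)/2)) := by
        rw [Finset.prod_congr rfl hflip, Finset.prod_mul_distrib, Finset.prod_const]
      have hsc : s ^ S.card = I ^ S.card := by
        rw [hs]
        split_ifs with h
        · rfl
        · exact hCeven.neg_pow I
      show Rhalf g E z = F z
      rw [hF]
      unfold Rhalf
      rw [← hn, ← hsplit, hprodS, hsc]
      ring
    exact (heq.differentiableAt_iff).mpr hFdiff

/-- for `z₀ ∈ ℂ ∖ Σ`, the function
`z ↦ (R^{1/2}(z)+R^{1/2}(z₀))/(2(z-z₀)R^{1/2}(z)) - 1/(z-z₀)` on `(ℂ ∖ Σ) ∖ {z₀}` extends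
holomorphically to all of `ℂ ∖ Σ`; i.e. the coefficient of `ω_{p₀E_0}` has exactly a simple
pole at `z₀` with residue `1` on the upper sheet. -/
theorem abelian_coefficient_removable_singularity (g : ℕ) (hg : 1 ≤ g) (E : ℕ → ℝ)
    (hE : ∀ i j : ℕ, i < j → j ≤ 2 * g + 1 → E i < E j)
    (z₀ : ℂ) (hz₀ : z₀ ∉ bandSet g E) :
    ∃ h : ℂ → ℂ, DifferentiableOn ℂ h (bandSet g E)ᶜ ∧
      ∀ z ∈ (bandSet g E)ᶜ \ {z₀},
        h z = (Rhalf g E z + Rhalf g E z₀) / (2 * (z - z₀) * Rhalf g E z) -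
          1 / (z - z₀) := by
  have hopen : IsOpen (bandSet g E)ᶜ := (bandSet_isClosed g E).isOpen_compl
  have hnhds : (bandSet g E)ᶜ ∈ 𝓝 z₀ := hopen.mem_nhds hz₀
  have hdiff := Rhalf_differentiableOn g E hE
  refine ⟨fun z => -(dslope (Rhalf g E) z₀ z) / (2 * Rhalf g E z), ?_, ?_⟩
  · exact (((Complex.differentiableOn_dslope hnhds).mpr hdiff).neg).div
      ((differentiableOn_const 2).mul hdiff)
      (fun z hz => mul_ne_zero two_ne_zero (Rhalf_ne_zero g E hE hz))
  · rintro z ⟨hz, hzne⟩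
    have hzz : z ≠ z₀ := fun h => hzne (by simp [h])
    have hA : Rhalf g E z ≠ 0 := Rhalf_ne_zero g E hE hz
    have hsub : z - z₀ ≠ 0 := sub_ne_zero.mpr hzz
    show -(dslope (Rhalf g E) z₀ z) / (2 * Rhalf g E z) = _
    rw [dslope_of_ne _ hzz, slope_def_field]
    field_simp
    ring
end

section
/- Let z₁, z₂ ∈ ℂ ∖ Σ and define, for real x > max(E_{2g+1}, |z₁|, |z₂|), f(x) = (R^{1/2}(x) + R^{1/2}(z₁)) / (2(x − z₁) R^{1/2}(x)) − (R^{1/2}(x) + R^{1/2}(z₂)) / (2(x − z₂) R^{1/2}(x)). Then x² f(x) → (z₁ − z₂)/2 as x → +∞ along the reals. (This expresses that the explicit Abelian differential ω_{p q} of the third kind with poles at p = (z₁, +) and q = (z₂, +) is holomorphic at the two points at infinity ∞±, i.e., its coefficient decays like x⁻² with the stated leading coefficient.) -/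
open Complex Filter Set Topology

lemma sqrt_prod_tendsto (n : ℕ) (E : ℕ → ℝ) (M : ℝ)
    (hEM : ∀ j ∈ Finset.range n, E j ≤ M) :
    Tendsto (fun x : ℝ => (∏ j ∈ Finset.range n, Real.sqrt (x - E j)) / Real.sqrt x ^ n)
      atTop (𝓝 1) := by
  have h : Tendsto (fun x : ℝ => ∏ j ∈ Finset.range n, Real.sqrt (1 - E j / x))
      atTop (𝓝 (∏ _j ∈ Finset.range n, 1)) := by
    refine tendsto_finset_prod (Finset.range n) ?_
    intro j _
    have h1 : Tendsto (fun x : ℝ => 1 - E j / x) atTop (𝓝 1) := by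
      have := (tendsto_inv_atTop_zero (𝕜 := ℝ)).const_mul (E j)
      simpa [div_eq_mul_inv] using tendsto_const_nhds.sub this
    have := (Real.continuous_sqrt.tendsto 1).comp h1
    simpa [Function.comp_def] using this
  simp only [Finset.prod_const_one] at h
  refine h.congr' ?_
  filter_upwards [eventually_gt_atTop (max M 0)] with x hx
  have hx0 : 0 < x := lt_of_le_of_lt (le_max_right _ _) hx
  rw [show Real.sqrt x ^ n = ∏ _j ∈ Finset.range n, Real.sqrt x by simp,
      ← Finset.prod_div_distrib]
  refine Finset.prod_congr rfl fun j hj => ?_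
  rw [← Real.sqrt_div (by linarith [le_max_left M 0, hEM j hj] : (0:ℝ) ≤ x - E j) x]
  congr 1
  field_simp

lemma Rhalf_real (g : ℕ) (E : ℕ → ℝ) (x M : ℝ)
    (hEM : ∀ j ∈ Finset.range (2*g+2), E j ≤ M) (hx : M < x) :
    Rhalf g E x = -((∏ j ∈ Finset.range (2*g+2), Real.sqrt (x - E j) : ℝ) : ℂ) := by
  unfold Rhalf
  rw [Complex.ofReal_prod]
  congr 1
  refine Finset.prod_congr rfl fun j hj => ?_
  have h0 : (0:ℝ) ≤ x - E j := by linarith [hEM j hj]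
  rw [show ((x:ℂ) - (E j:ℂ)) = ((x - E j : ℝ) : ℂ) by push_cast; ring,
      show ((1:ℂ)/2) = (((1:ℝ)/2 : ℝ) : ℂ) by norm_num,
      ← Complex.ofReal_cpow h0, Real.sqrt_eq_rpow]

/-- for `z₁, z₂ ∈ ℂ ∖ Σ`, the coefficient
`f(x) = (R^{1/2}(x)+R^{1/2}(z₁))/(2(x-z₁)R^{1/2}(x)) - (R^{1/2}(x)+R^{1/2}(z₂))/(2(x-z₂)R^{1/2}(x))`
of the Abelian differential `ω_{pq}` of the third kind satisfies
`x² f(x) → (z₁ - z₂)/2` as `x → +∞` along the reals; i.e. `ω_{pq}` is holomorphic at the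
points at infinity. -/
theorem abelian_third_kind_decay_at_infinity (g : ℕ) (hg : 1 ≤ g) (E : ℕ → ℝ)
    (hE : ∀ i j : ℕ, i < j → j ≤ 2 * g + 1 → E i < E j)
    (z₁ z₂ : ℂ) (h₁ : z₁ ∉ bandSet g E) (h₂ : z₂ ∉ bandSet g E) :
    Tendsto
      (fun x : ℝ =>
        ((x : ℂ)) ^ 2 *
          ((Rhalf g E (x : ℂ) + Rhalf g E z₁) / (2 * ((x : ℂ) - z₁) * Rhalf g E (x : ℂ)) -
            (Rhalf g E (x : ℂ) + Rhalf g E z₂) / (2 * ((x : ℂ) - z₂) * Rhalf g E (x : ℂ))))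
      atTop (𝓝 ((z₁ - z₂) / 2)) := by
  set M : ℝ := ∑ j ∈ Finset.range (2*g+2), |E j| with hMdef
  have hM0 : 0 ≤ M := Finset.sum_nonneg fun i _ => abs_nonneg _
  have hEM : ∀ j ∈ Finset.range (2*g+2), E j ≤ M := fun j hj =>
    le_trans (le_abs_self _) (Finset.single_le_sum (fun i _ => abs_nonneg (E i)) hj)
  -- inverse tends to 0
  have hinv0 : Tendsto (fun x : ℝ => ((x:ℂ))⁻¹) atTop (𝓝 0) := by
    have := (Complex.continuous_ofReal.tendsto 0).comp (tendsto_inv_atTop_zero (𝕜 := ℝ))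
    simpa [Function.comp_def] using this
  -- x/(x - z) → 1
  have hq : ∀ z : ℂ, Tendsto (fun x : ℝ => (x:ℂ) / ((x:ℂ) - z)) atTop (𝓝 1) := by
    intro z
    have h1 : Tendsto (fun x : ℝ => ((1:ℂ) - z * ((x:ℂ))⁻¹)⁻¹) atTop (𝓝 1) := by
      have h0 : Tendsto (fun x : ℝ => (1:ℂ) - z * ((x:ℂ))⁻¹) atTop (𝓝 ((1:ℂ) - z * 0)) :=
        tendsto_const_nhds.sub (hinv0.const_mul z)
      rw [mul_zero, sub_zero] at h0
      simpa using h0.inv₀ one_ne_zero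
    refine h1.congr' ?_
    filter_upwards [eventually_gt_atTop (max ‖z‖ 1)] with x hx
    have hx0 : (x:ℂ) ≠ 0 := by
      simp only [ne_eq, Complex.ofReal_eq_zero]
      have := lt_of_le_of_lt (le_max_right _ _) hx; linarith
    have hxz : (x:ℂ) - z ≠ 0 := by
      intro h
      have : z = (x:ℂ) := by linear_combination -h
      rw [this] at hx
      simp only [Complex.norm_real, Real.norm_eq_abs] at hx
      have h1 := lt_of_le_of_lt (le_max_left _ _) hx
      have h2 := lt_of_le_of_lt (le_max_right _ _) hx
      rw [abs_of_pos (by linarith)] at h1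
      exact lt_irrefl _ h1
    field_simp
  -- Rhalf(x)/x^(g+1) → -1, hence x^(g+1)/Rhalf(x) → -1
  have hC : Tendsto (fun x : ℝ => Rhalf g E x / (x:ℂ) ^ (g+1)) atTop (𝓝 (-1)) := by
    have hr := sqrt_prod_tendsto (2*g+2) E M hEM
    have hc : Tendsto (fun x : ℝ =>
        -(((∏ j ∈ Finset.range (2*g+2), Real.sqrt (x - E j)) / Real.sqrt x ^ (2*g+2) : ℝ) : ℂ))
        atTop (𝓝 (-1)) := by
      have := (Complex.continuous_ofReal.tendsto 1).comp hr
      simpa [Function.comp] using this.neg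
    refine hc.congr' ?_
    filter_upwards [eventually_gt_atTop M] with x hx
    have hx0 : 0 < x := lt_of_le_of_lt hM0 hx
    have hxpow : (Real.sqrt x ^ (2*g+2) : ℝ) = x ^ (g+1) := by
      rw [show 2*g+2 = 2*(g+1) by ring, pow_mul, Real.sq_sqrt hx0.le]
    rw [Rhalf_real g E x M hEM hx]
    push_cast [hxpow]
    ring
  have hDinv : Tendsto (fun x : ℝ => (x:ℂ) ^ (g+1) / Rhalf g E x) atTop (𝓝 (-1)) := by
    have := hC.inv₀ (by norm_num)
    simpa [inv_div, inv_neg, inv_one] using this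
  -- nonvanishing of Rhalf on reals
  have hRne : ∀ x : ℝ, M < x → Rhalf g E x ≠ 0 := by
    intro x hx
    rw [Rhalf_real g E x M hEM hx]
    have : 0 < ∏ j ∈ Finset.range (2*g+2), Real.sqrt (x - E j) :=
      Finset.prod_pos fun j hj => Real.sqrt_pos.mpr (by linarith [hEM j hj])
    simp only [ne_eq, neg_eq_zero, Complex.ofReal_eq_zero]
    exact this.ne'
  -- zero limits
  have hzero : ∀ z R0 : ℂ, Tendsto (fun x : ℝ =>
      R0 / 2 * ((x:ℂ) / ((x:ℂ) - z) * (((x:ℂ))⁻¹ ^ g * ((x:ℂ) ^ (g+1) / Rhalf g E x))))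
      atTop (𝓝 0) := by
    intro z R0
    have hpow : Tendsto (fun x : ℝ => ((x:ℂ))⁻¹ ^ g) atTop (𝓝 0) := by
      have := hinv0.pow g
      simpa [zero_pow (by omega : g ≠ 0)] using this
    have := (((hq z).mul (hpow.mul hDinv))).const_mul (R0 / 2)
    simpa using this
  -- main limit as sum
  have hmain : Tendsto (fun x : ℝ =>
      (z₁ - z₂) / 2 * ((x:ℂ) / ((x:ℂ) - z₁) * ((x:ℂ) / ((x:ℂ) - z₂)))
      + Rhalf g E z₁ / 2 * ((x:ℂ) / ((x:ℂ) - z₁) * (((x:ℂ))⁻¹ ^ g * ((x:ℂ) ^ (g+1) / Rhalf g E x)))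
      - Rhalf g E z₂ / 2 * ((x:ℂ) / ((x:ℂ) - z₂) * (((x:ℂ))⁻¹ ^ g * ((x:ℂ) ^ (g+1) / Rhalf g E x))))
      atTop (𝓝 ((z₁ - z₂) / 2)) := by
    have h1 := (((hq z₁).mul (hq z₂))).const_mul ((z₁ - z₂) / 2)
    have := (h1.add (hzero z₁ (Rhalf g E z₁))).sub (hzero z₂ (Rhalf g E z₂))
    simpa using this
  refine hmain.congr' ?_
  filter_upwards [eventually_gt_atTop (max M (max ‖z₁‖ ‖z₂‖))] with x hx
  have hxM : M < x := lt_of_le_of_lt (le_max_left _ _) hx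
  have hx0 : 0 < x := lt_of_le_of_lt hM0 hxM
  have hxc : (x:ℂ) ≠ 0 := by simpa using hx0.ne'
  have hR := hRne x hxM
  have habs : ∀ z : ℂ, ‖z‖ < x → (x:ℂ) - z ≠ 0 := by
    intro z hz h
    have : z = (x:ℂ) := by linear_combination -h
    rw [this, Complex.norm_real, Real.norm_eq_abs, abs_of_pos hx0] at hz
    exact lt_irrefl _ hz
  have hz₁ : (x:ℂ) - z₁ ≠ 0 := habs z₁
    (lt_of_le_of_lt (le_trans (le_max_left _ _) (le_max_right M _)) hx)
  have hz₂ : (x:ℂ) - z₂ ≠ 0 := habs z₂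
    (lt_of_le_of_lt (le_trans (le_max_right _ _) (le_max_right M _)) hx)
  have hxg : ((x:ℂ)) ^ g ≠ 0 := pow_ne_zero _ hxc
  have key : ∀ (z Rz : ℂ), (x:ℂ) - z ≠ 0 →
      (x:ℂ) ^ 2 * ((Rhalf g E x + Rz) / (2 * ((x:ℂ) - z) * Rhalf g E x)) =
      (x:ℂ) ^ 2 / (2 * ((x:ℂ) - z)) +
        Rz / 2 * ((x:ℂ) / ((x:ℂ) - z) * (((x:ℂ))⁻¹ ^ g * ((x:ℂ) ^ (g+1) / Rhalf g E x))) := by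
    intro z Rz hz
    have e1 : ((x:ℂ))⁻¹ ^ g * ((x:ℂ) ^ (g+1) / Rhalf g E x) = (x:ℂ) / Rhalf g E x := by
      rw [inv_pow, pow_succ]
      field_simp
    rw [e1]
    field_simp
  have hsplit : (x:ℂ) ^ 2 / (2 * ((x:ℂ) - z₁)) - (x:ℂ) ^ 2 / (2 * ((x:ℂ) - z₂)) =
      (z₁ - z₂) / 2 * ((x:ℂ) / ((x:ℂ) - z₁) * ((x:ℂ) / ((x:ℂ) - z₂))) := by
    field_simp
    ring
  rw [mul_sub, key z₁ _ hz₁, key z₂ _ hz₂, ← hsplit]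
  ring
end
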